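/- arXiv:1901.01591 — 5 statements merged into one kernel-verified Lean document; each statement's English description precedes it below -/
import Mathlib

section
/- Fix k ≥ 1 and an integer r ≥ −2. Let (g_n(t))_{n≥2} be a sequence of polynomials in ℚ[t] such that each g_n(t) is unimodal and palindromic with center of symmetry (n+r)/2. If (G_n(x,t))_{n≥2} is a sequence of polynomials in ℚ[x_1,…,x_k,t], each symmetric in x_1,…,x_k, satisfying the identity of formal power series in z: D(x,t,z) · Σ_{n≥2} G_n(x,t) z^n = Σ_{n≥2} g_n(t) e_n(x) z^n, then each G_n(x,t), regarded as a polynomial in t with symmetric-polynomial coefficients, is e-unimodal and palindromic with center of symmetry (n+r)/2. -/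
open Finset MvPolynomial Polynomial

attribute [local instance] Classical.propDecidable

noncomputable section

/-- the t-analogue `[m]_t = 1 + t + ⋯ + t^(m-1)`, as a polynomial in `t = Polynomial.X`
with coefficients in `R[x₁,…,x_k]` -/
def tnum (R : Type) [CommRing R] (k m : ℕ) : Polynomial (MvPolynomial (Fin k) R) :=
  ∑ j ∈ Finset.range m, Polynomial.X ^ j

/-- `D(x,t,z) = 1 - Σ_{i≥2} t[i-1]_t e_i(x) z^i`, a formal power series in `z` whose
coefficients are polynomials in `t` with coefficients in `R[x₁,…,x_k]`. -/
def Dser (R : Type) [CommRing R] (k : ℕ) : PowerSeries (Polynomial (MvPolynomial (Fin k) R)) :=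
  PowerSeries.mk fun i =>
    if i = 0 then 1
    else if i = 1 then 0
    else -(Polynomial.X * tnum R k (i - 1) * Polynomial.C (esymm (Fin k) R i))

/-- e-positivity of a symmetric polynomial in `x₁,…,x_k` (no `t`): it is a nonnegative
combination of products `e_λ = e_{λ₁}⋯e_{λ_ℓ}` over partitions `λ` (multisets of positive
integers). -/
def EPosX (R : Type) [CommRing R] [PartialOrder R] {k : ℕ} (P : MvPolynomial (Fin k) R) : Prop :=
  ∃ (S : Finset (Multiset ℕ)) (c : Multiset ℕ → R),
    (∀ μ ∈ S, ∀ i ∈ μ, 0 < i) ∧ (∀ μ ∈ S, 0 ≤ c μ) ∧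
    P = ∑ μ ∈ S, MvPolynomial.C (c μ) * (μ.map (esymm (Fin k) R)).prod

/-- e-positivity of a polynomial in `t` with coefficients in `R[x₁,…,x_k]`:
`P = Σ_λ c_λ(t) e_λ(x)` over partitions `λ`, where each `c_λ(t)` has nonnegative
coefficients. -/
def EPosT (R : Type) [CommRing R] [PartialOrder R] {k : ℕ}
    (P : Polynomial (MvPolynomial (Fin k) R)) : Prop :=
  ∃ (S : Finset (Multiset ℕ)) (c : Multiset ℕ → Polynomial R),
    (∀ μ ∈ S, ∀ i ∈ μ, 0 < i) ∧ (∀ μ ∈ S, ∀ j, 0 ≤ (c μ).coeff j) ∧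
    P = ∑ μ ∈ S, ((c μ).map (MvPolynomial.C : R →+* MvPolynomial (Fin k) R)) *
          Polynomial.C ((μ.map (esymm (Fin k) R)).prod)

/-- `P`, a polynomial in `t` with coefficients in `R[x₁,…,x_k]`, is symmetric in
`x₁,…,x_k`. -/
def SymmX (R : Type) [CommRing R] {k : ℕ} (P : Polynomial (MvPolynomial (Fin k) R)) : Prop :=
  ∀ j : ℕ, (P.coeff j).IsSymmetric

/-- A polynomial `A = Σ_j a_j t^j` is palindromic with center of symmetry `m/2`:
`a_j = a_{m-j}` for all `j`, where coefficients with index outside `[0,m]` are `0`. -/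
def PalinZ {R : Type} [CommRing R] (A : Polynomial R) (m : ℤ) : Prop :=
  ∀ j : ℕ, A.coeff j = if (j : ℤ) ≤ m then A.coeff (m - (j : ℤ)).toNat else 0

/-- e-unimodality of a polynomial in `t` with coefficients in `R[x₁,…,x_k]`:
`0 ≤_e a_0 ≤_e a_1 ≤_e ⋯ ≤_e a_c ≥_e a_{c+1} ≥_e ⋯ ≥_e 0` for some `c`, where
`f ≤_e g` means `g - f` is e-positive. -/
def EUnimodal (R : Type) [CommRing R] [PartialOrder R] {k : ℕ}
    (A : Polynomial (MvPolynomial (Fin k) R)) : Prop :=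
  EPosX R (A.coeff 0) ∧
  ∃ c : ℕ, (∀ j < c, EPosX R (A.coeff (j + 1) - A.coeff j)) ∧
    (∀ j, c ≤ j → EPosX R (A.coeff j - A.coeff (j + 1)))

/-- A polynomial in `ℚ[t]` is unimodal: `0 ≤ a_0 ≤ a_1 ≤ ⋯ ≤ a_c ≥ a_{c+1} ≥ ⋯ ≥ 0`
for some `c`. -/
def UnimodalQ (g : Polynomial ℚ) : Prop :=
  0 ≤ g.coeff 0 ∧
  ∃ c : ℕ, (∀ j < c, g.coeff j ≤ g.coeff (j + 1)) ∧
    (∀ j, c ≤ j → g.coeff (j + 1) ≤ g.coeff j)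

namespace EPAux
variable {k : ℕ}

lemma eposx_zero : EPosX ℚ (0 : MvPolynomial (Fin k) ℚ) :=
  ⟨∅, fun _ => 0, by simp, by simp, by simp⟩

lemma eposx_const {q : ℚ} (hq : 0 ≤ q) : EPosX ℚ (MvPolynomial.C q : MvPolynomial (Fin k) ℚ) :=
  ⟨{0}, fun _ => q, by simp, by simp [hq], by simp⟩

lemma eposx_add {P Q : MvPolynomial (Fin k) ℚ} (hP : EPosX ℚ P) (hQ : EPosX ℚ Q) :
    EPosX ℚ (P + Q) := by
  obtain ⟨S, c, hS, hc, rfl⟩ := hP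
  obtain ⟨T, d, hT, hd, rfl⟩ := hQ
  refine ⟨S ∪ T, fun μ => (if μ ∈ S then c μ else 0) + (if μ ∈ T then d μ else 0), ?_, ?_, ?_⟩
  · intro μ hμ
    rcases Finset.mem_union.1 hμ with h | h
    · exact hS μ h
    · exact hT μ h
  · intro μ _
    have h1 : 0 ≤ (if μ ∈ S then c μ else 0) := by split_ifs with h; exacts [hc μ h, le_refl 0]
    have h2 : 0 ≤ (if μ ∈ T then d μ else 0) := by split_ifs with h; exacts [hd μ h, le_refl 0]
    exact add_nonneg h1 h2
  · have e1 : ∑ μ ∈ S, MvPolynomial.C (c μ) * (μ.map (esymm (Fin k) ℚ)).prod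
        = ∑ μ ∈ S ∪ T, MvPolynomial.C (if μ ∈ S then c μ else 0) * (μ.map (esymm (Fin k) ℚ)).prod :=
      calc ∑ μ ∈ S, MvPolynomial.C (c μ) * (μ.map (esymm (Fin k) ℚ)).prod
          = ∑ μ ∈ S, MvPolynomial.C (if μ ∈ S then c μ else 0) * (μ.map (esymm (Fin k) ℚ)).prod :=
            Finset.sum_congr rfl (fun μ hμ => by rw [if_pos hμ])
        _ = ∑ μ ∈ S ∪ T, MvPolynomial.C (if μ ∈ S then c μ else 0) * (μ.map (esymm (Fin k) ℚ)).prod :=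
            Finset.sum_subset Finset.subset_union_left
              (fun μ _ h => by rw [if_neg h, map_zero, zero_mul])
    have e2 : ∑ μ ∈ T, MvPolynomial.C (d μ) * (μ.map (esymm (Fin k) ℚ)).prod
        = ∑ μ ∈ S ∪ T, MvPolynomial.C (if μ ∈ T then d μ else 0) * (μ.map (esymm (Fin k) ℚ)).prod :=
      calc ∑ μ ∈ T, MvPolynomial.C (d μ) * (μ.map (esymm (Fin k) ℚ)).prod
          = ∑ μ ∈ T, MvPolynomial.C (if μ ∈ T then d μ else 0) * (μ.map (esymm (Fin k) ℚ)).prod :=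
            Finset.sum_congr rfl (fun μ hμ => by rw [if_pos hμ])
        _ = ∑ μ ∈ S ∪ T, MvPolynomial.C (if μ ∈ T then d μ else 0) * (μ.map (esymm (Fin k) ℚ)).prod :=
            Finset.sum_subset Finset.subset_union_right
              (fun μ _ h => by rw [if_neg h, map_zero, zero_mul])
    rw [e1, e2, ← Finset.sum_add_distrib]
    exact Finset.sum_congr rfl (fun μ _ => by rw [map_add, add_mul])

lemma eposx_sum {ι : Type*} {s : Finset ι} {f : ι → MvPolynomial (Fin k) ℚ}
    (h : ∀ i ∈ s, EPosX ℚ (f i)) : EPosX ℚ (∑ i ∈ s, f i) := by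
  classical
  induction s using Finset.induction_on with
  | empty => simpa using eposx_zero
  | insert _ _ hx ih =>
    rw [Finset.sum_insert hx]
    exact eposx_add (h _ (Finset.mem_insert_self _ _))
      (ih fun i hi => h i (Finset.mem_insert_of_mem hi))

lemma eposx_single_mul {Q : MvPolynomial (Fin k) ℚ} (hQ : EPosX ℚ Q) {q : ℚ} (hq : 0 ≤ q)
    {μ : Multiset ℕ} (hμ : ∀ i ∈ μ, 0 < i) :
    EPosX ℚ (MvPolynomial.C q * (μ.map (esymm (Fin k) ℚ)).prod * Q) := by
  obtain ⟨T, d, hT, hd, rfl⟩ := hQ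
  refine ⟨T.image (μ + ·), fun ρ => q * d (ρ - μ), ?_, ?_, ?_⟩
  · intro ρ hρ
    obtain ⟨ν, hν, rfl⟩ := Finset.mem_image.1 hρ
    intro i hi
    rcases Multiset.mem_add.1 hi with h | h
    · exact hμ i h
    · exact hT ν hν i h
  · intro ρ hρ
    obtain ⟨ν, hν, rfl⟩ := Finset.mem_image.1 hρ
    dsimp only
    rw [add_tsub_cancel_left]
    exact mul_nonneg hq (hd ν hν)
  · rw [Finset.sum_image (fun a _ b _ h => by simpa using h), Finset.mul_sum]
    refine Finset.sum_congr rfl (fun ν hν => ?_)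
    dsimp only
    rw [add_tsub_cancel_left, Multiset.map_add, Multiset.prod_add, map_mul]
    ring

lemma eposx_mul {P Q : MvPolynomial (Fin k) ℚ} (hP : EPosX ℚ P) (hQ : EPosX ℚ Q) :
    EPosX ℚ (P * Q) := by
  obtain ⟨S, c, hS, hc, rfl⟩ := hP
  rw [Finset.sum_mul]
  exact eposx_sum (fun μ hμ => eposx_single_mul hQ (hc μ hμ) (hS μ hμ))

lemma eposx_esymm {n : ℕ} (hn : 0 < n) : EPosX ℚ (esymm (Fin k) ℚ n) :=
  ⟨{({n} : Multiset ℕ)}, fun _ => 1, by simpa using hn, by simp, by simp⟩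

lemma eposx_smul {q : ℚ} (hq : 0 ≤ q) {P : MvPolynomial (Fin k) ℚ} (hP : EPosX ℚ P) :
    EPosX ℚ (MvPolynomial.C q * P) := eposx_mul (eposx_const hq) hP

end EPAux

namespace TNAux
variable {k : ℕ}

lemma tnum_succ (a : ℕ) : tnum ℚ k (a + 1) = tnum ℚ k a + Polynomial.X ^ a :=
  Finset.sum_range_succ _ _

lemma tnum_add (m n : ℕ) :
    tnum ℚ k (m + n) = tnum ℚ k m + Polynomial.X ^ m * tnum ℚ k n := by
  unfold tnum
  rw [Finset.sum_range_add, Finset.mul_sum]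
  simp [pow_add]

lemma tnum_mul (a b : ℕ) : tnum ℚ k a * tnum ℚ k b
    = ∑ s ∈ Finset.range (min a b), Polynomial.X ^ s * tnum ℚ k (a + b - 1 - 2 * s) := by
  induction a with
  | zero => simp [tnum]
  | succ a ih =>
    rw [tnum_succ, add_mul, ih]
    rcases le_or_gt b a with hb | hb
    · have hmin : min (a + 1) b = b := by omega
      have hmin' : min a b = b := by omega
      rw [hmin, hmin']
      have step : ∀ s ∈ Finset.range b,
          Polynomial.X ^ s * tnum ℚ k (a + 1 + b - 1 - 2 * s)
          = Polynomial.X ^ s * tnum ℚ k (a + b - 1 - 2 * s)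
            + Polynomial.X ^ (a + b - 1 - s) := by
        intro s hs
        have hs' : s < b := Finset.mem_range.1 hs
        have h1 : a + 1 + b - 1 - 2 * s = (a + b - 1 - 2 * s) + 1 := by omega
        rw [h1, tnum_succ, mul_add, ← pow_add]
        congr 2
        omega
      rw [Finset.sum_congr rfl step, Finset.sum_add_distrib]
      have refl1 : ∑ s ∈ Finset.range b, (Polynomial.X : Polynomial (MvPolynomial (Fin k) ℚ)) ^ (a + b - 1 - s)
          = (Polynomial.X : Polynomial (MvPolynomial (Fin k) ℚ)) ^ a * tnum ℚ k b := by
        have lhs_eq : ∑ s ∈ Finset.range b, (Polynomial.X : Polynomial (MvPolynomial (Fin k) ℚ)) ^ (a + b - 1 - s)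
            = ∑ s ∈ Finset.range b, (fun j => (Polynomial.X : Polynomial (MvPolynomial (Fin k) ℚ)) ^ (a + j)) (b - 1 - s) :=
          Finset.sum_congr rfl fun s hs => by
            have := Finset.mem_range.1 hs
            dsimp only
            rw [show a + (b - 1 - s) = a + b - 1 - s by omega]
        have rhs_eq : (Polynomial.X : Polynomial (MvPolynomial (Fin k) ℚ)) ^ a * tnum ℚ k b
            = ∑ j ∈ Finset.range b, (Polynomial.X : Polynomial (MvPolynomial (Fin k) ℚ)) ^ (a + j) := by
          unfold tnum
          rw [Finset.mul_sum]
          exact Finset.sum_congr rfl fun j _ => by rw [← pow_add]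
        rw [lhs_eq, rhs_eq]
        exact Finset.sum_range_reflect (fun j => (Polynomial.X : Polynomial (MvPolynomial (Fin k) ℚ)) ^ (a + j)) b
      rw [refl1]
    · have hmin : min (a + 1) b = a + 1 := by omega
      have hmin' : min a b = a := by omega
      rw [hmin, hmin', Finset.sum_range_succ]
      have step : ∀ s ∈ Finset.range a,
          Polynomial.X ^ s * tnum ℚ k (a + 1 + b - 1 - 2 * s)
          = Polynomial.X ^ s * tnum ℚ k (a + b - 1 - 2 * s)
            + Polynomial.X ^ (a + b - 1 - s) := by
        intro s hs
        have hs' : s < a := Finset.mem_range.1 hs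
        have h1 : a + 1 + b - 1 - 2 * s = (a + b - 1 - 2 * s) + 1 := by omega
        rw [h1, tnum_succ, mul_add, ← pow_add]
        congr 2
        omega
      rw [Finset.sum_congr rfl step, Finset.sum_add_distrib]
      have hsplit : (Polynomial.X : Polynomial (MvPolynomial (Fin k) ℚ)) ^ a * tnum ℚ k b
          = Polynomial.X ^ a * tnum ℚ k (b - a)
            + ∑ s ∈ Finset.range a, Polynomial.X ^ (a + b - 1 - s) := by
        have hb' : b = (b - a) + a := by omega
        rw [show tnum ℚ k b = tnum ℚ k ((b - a) + a) by rw [← hb'], tnum_add, mul_add]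
        rw [add_right_inj]
        rw [← mul_assoc, ← pow_add, show a + (b - a) = b by omega]
        have lhs_eq : (Polynomial.X : Polynomial (MvPolynomial (Fin k) ℚ)) ^ b * tnum ℚ k a
            = ∑ j ∈ Finset.range a, (Polynomial.X : Polynomial (MvPolynomial (Fin k) ℚ)) ^ (b + j) := by
          unfold tnum
          rw [Finset.mul_sum]
          exact Finset.sum_congr rfl fun j _ => by rw [← pow_add]
        have rhs_eq : ∑ s ∈ Finset.range a, (Polynomial.X : Polynomial (MvPolynomial (Fin k) ℚ)) ^ (a + b - 1 - s)
            = ∑ s ∈ Finset.range a, (fun j => (Polynomial.X : Polynomial (MvPolynomial (Fin k) ℚ)) ^ (b + j)) (a - 1 - s) :=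
          Finset.sum_congr rfl fun s hs => by
            have := Finset.mem_range.1 hs
            dsimp only
            rw [show b + (a - 1 - s) = a + b - 1 - s by omega]
        rw [lhs_eq, rhs_eq]
        exact (Finset.sum_range_reflect (fun j => (Polynomial.X : Polynomial (MvPolynomial (Fin k) ℚ)) ^ (b + j)) a).symm
      rw [hsplit]
      have h2 : a + 1 + b - 1 - 2 * a = b - a := by omega
      rw [h2]
      ring

lemma tnum_coeff (L j : ℕ) : (tnum ℚ k L).coeff j = if j < L then 1 else 0 := by
  unfold tnum
  rw [Polynomial.finset_sum_coeff]
  by_cases h : j < L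
  · rw [Finset.sum_eq_single_of_mem j (Finset.mem_range.2 h)
      (fun b _ hb => by rw [Polynomial.coeff_X_pow, if_neg (fun hh => hb hh.symm)])]
    rw [Polynomial.coeff_X_pow, if_pos rfl, if_pos h]
  · rw [if_neg h]
    refine Finset.sum_eq_zero fun b hb => ?_
    rw [Polynomial.coeff_X_pow, if_neg]
    have := Finset.mem_range.1 hb
    omega

lemma gen_coeff (q : MvPolynomial (Fin k) ℚ) (i L j : ℕ) :
    (Polynomial.C q * Polynomial.X ^ i * tnum ℚ k L).coeff j
      = if i ≤ j ∧ j < i + L then q else 0 := by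
  rw [mul_assoc, Polynomial.coeff_C_mul]
  rcases le_or_gt i j with h | h
  · obtain ⟨d, rfl⟩ := Nat.exists_eq_add_of_le h
    rw [add_comm i d, Polynomial.coeff_X_pow_mul, tnum_coeff]
    split_ifs with h1 h2 h2 <;> simp_all <;> omega
  · rw [Polynomial.coeff_X_pow_mul']
    rw [if_neg (by omega), if_neg (by omega)]
    simp

end TNAux

namespace GAux
open EPAux TNAux
variable {k : ℕ}

def genSet (k m : ℕ) : Set (Polynomial (MvPolynomial (Fin k) ℚ)) :=
  {P | ∃ q i, EPosX ℚ q ∧ P = Polynomial.C q * Polynomial.X ^ i * tnum ℚ k (m + 1 - 2 * i)}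

def Good (k m : ℕ) (P : Polynomial (MvPolynomial (Fin k) ℚ)) : Prop :=
  P ∈ AddSubmonoid.closure (genSet k m)

lemma gen_coeff_m (q : MvPolynomial (Fin k) ℚ) (i m j : ℕ) :
    (Polynomial.C q * Polynomial.X ^ i * tnum ℚ k (m + 1 - 2 * i)).coeff j
      = if i ≤ j ∧ i + j ≤ m then q else 0 := by
  rw [gen_coeff]
  split_ifs with h1 h2 h2 <;> first | rfl | omega

lemma good_palin {m : ℕ} {P : Polynomial (MvPolynomial (Fin k) ℚ)} (h : Good k m P) :
    PalinZ P (m : ℤ) := by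
  refine AddSubmonoid.closure_induction (fun x hx => ?_) (fun j => by simp) ?_ h
  · obtain ⟨q, i, hq, hxe⟩ := hx
    intro j
    rw [hxe, gen_coeff_m, gen_coeff_m]
    split_ifs <;> first | rfl | omega
  · intro x y hx hy px py j
    by_cases hc : (j : ℤ) ≤ (m : ℤ)
    · simp only [Polynomial.coeff_add, px j, py j, if_pos hc]
    · simp only [Polynomial.coeff_add, px j, py j, if_neg hc, add_zero]

lemma good_unimodal {m : ℕ} {P : Polynomial (MvPolynomial (Fin k) ℚ)} (h : Good k m P) :
    EUnimodal ℚ P := by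
  suffices H : EPosX ℚ (P.coeff 0) ∧
      (∀ j, j + 1 ≤ m / 2 → EPosX ℚ (P.coeff (j + 1) - P.coeff j)) ∧
      (∀ j, m / 2 ≤ j → EPosX ℚ (P.coeff j - P.coeff (j + 1))) by
    exact ⟨H.1, m / 2, fun j hj => H.2.1 j (by omega), fun j hj => H.2.2 j hj⟩
  refine AddSubmonoid.closure_induction (fun x hx => ?_) ?_ ?_ h
  · obtain ⟨q, i, hq, hxe⟩ := hx
    rw [hxe]
    refine ⟨?_, ?_, ?_⟩
    · rw [gen_coeff_m]
      split_ifs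
      · exact hq
      · exact eposx_zero
    · intro j hj
      rw [gen_coeff_m, gen_coeff_m]
      split_ifs with h1 h2 h2
      · rw [sub_self]; exact eposx_zero
      · rw [sub_zero]; exact hq
      · omega
      · rw [sub_zero]; exact eposx_zero
    · intro j hj
      rw [gen_coeff_m, gen_coeff_m]
      split_ifs with h1 h2 h2
      · rw [sub_self]; exact eposx_zero
      · rw [sub_zero]; exact hq
      · omega
      · rw [sub_zero]; exact eposx_zero
  · exact ⟨by simpa using eposx_zero, fun j _ => by simpa using eposx_zero,
      fun j _ => by simpa using eposx_zero⟩
  · rintro x y hx hy ⟨px0, px1, px2⟩ ⟨py0, py1, py2⟩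
    refine ⟨?_, ?_, ?_⟩
    · rw [Polynomial.coeff_add]; exact eposx_add px0 py0
    · intro j hj
      simp only [Polynomial.coeff_add]
      have e : x.coeff (j+1) + y.coeff (j+1) - (x.coeff j + y.coeff j)
          = (x.coeff (j+1) - x.coeff j) + (y.coeff (j+1) - y.coeff j) := by ring
      rw [e]
      exact eposx_add (px1 j hj) (py1 j hj)
    · intro j hj
      simp only [Polynomial.coeff_add]
      have e : x.coeff j + y.coeff j - (x.coeff (j+1) + y.coeff (j+1))
          = (x.coeff j - x.coeff (j+1)) + (y.coeff j - y.coeff (j+1)) := by ring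
      rw [e]
      exact eposx_add (px2 j hj) (py2 j hj)

lemma gen_mul {m m' : ℕ} {P Q : Polynomial (MvPolynomial (Fin k) ℚ)}
    (hP : P ∈ genSet k m) (hQ : Q ∈ genSet k m') :
    P * Q ∈ AddSubmonoid.closure (genSet k (m + m')) := by
  obtain ⟨q, i, hq, hPe⟩ := hP
  obtain ⟨q', i', hq', hQe⟩ := hQ
  rw [hPe, hQe]
  have key : (Polynomial.C q * Polynomial.X ^ i * tnum ℚ k (m + 1 - 2 * i))
        * (Polynomial.C q' * Polynomial.X ^ i' * tnum ℚ k (m' + 1 - 2 * i'))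
      = ∑ s ∈ Finset.range (min (m + 1 - 2 * i) (m' + 1 - 2 * i')),
          Polynomial.C (q * q') * Polynomial.X ^ (i + i' + s)
            * tnum ℚ k ((m + m') + 1 - 2 * (i + i' + s)) := by
    have e1 : (Polynomial.C q * Polynomial.X ^ i * tnum ℚ k (m + 1 - 2 * i))
        * (Polynomial.C q' * Polynomial.X ^ i' * tnum ℚ k (m' + 1 - 2 * i'))
        = Polynomial.C (q * q') * Polynomial.X ^ (i + i')
            * (tnum ℚ k (m + 1 - 2 * i) * tnum ℚ k (m' + 1 - 2 * i')) := by
      rw [map_mul, pow_add]; ring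
    rw [e1, tnum_mul, Finset.mul_sum]
    refine Finset.sum_congr rfl fun s hs => ?_
    have hs' := Finset.mem_range.1 hs
    have e2 : (m + 1 - 2 * i) + (m' + 1 - 2 * i') - 1 - 2 * s
        = (m + m') + 1 - 2 * (i + i' + s) := by omega
    rw [e2, pow_add, pow_add]
    ring
  rw [key]
  refine AddSubmonoid.sum_mem _ fun s _ => AddSubmonoid.subset_closure ?_
  exact ⟨q * q', i + i' + s, eposx_mul hq hq', rfl⟩

lemma good_mul {m m' : ℕ} {P Q : Polynomial (MvPolynomial (Fin k) ℚ)}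
    (hP : Good k m P) (hQ : Good k m' Q) : Good k (m + m') (P * Q) := by
  refine AddSubmonoid.closure_induction (fun x hx => ?_) ?_ ?_ hP
  · refine AddSubmonoid.closure_induction (fun y hy => ?_) ?_ ?_ hQ
    · exact gen_mul hx hy
    · rw [mul_zero]; exact AddSubmonoid.zero_mem _
    · intro y z _ _ h1 h2
      rw [mul_add]; exact AddSubmonoid.add_mem _ h1 h2
  · rw [zero_mul]; exact AddSubmonoid.zero_mem _
  · intro x y _ _ h1 h2
    rw [add_mul]; exact AddSubmonoid.add_mem _ h1 h2

end GAux
namespace GAux2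
open EPAux TNAux GAux
variable {k : ℕ}

lemma good_of_unimodal_palin {m : ℕ} {E : MvPolynomial (Fin k) ℚ} (hE : EPosX ℚ E)
    {g : Polynomial ℚ} (hu : UnimodalQ g) (hp : PalinZ g (m : ℤ)) :
    Good k m (g.map (MvPolynomial.C : ℚ →+* MvPolynomial (Fin k) ℚ) * Polynomial.C E) := by
  obtain ⟨h0, cc, hinc, hdec⟩ := hu
  have hzero : ∀ j : ℕ, m < j → g.coeff j = 0 := by
    intro j hj
    have h := hp j
    rwa [if_neg (by omega)] at h
  have hpal : ∀ j : ℕ, j ≤ m → g.coeff j = g.coeff (m - j) := by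
    intro j hj
    have h := hp j
    rw [if_pos (by omega)] at h
    rw [h]
    congr 1
    omega
  have anti : ∀ u v : ℕ, cc ≤ u → u ≤ v → g.coeff v ≤ g.coeff u := by
    intro u v hcu huv
    induction v, huv using Nat.le_induction with
    | base => exact le_refl _
    | succ v hv ih => exact le_trans (hdec v (by omega)) ih
  set c : ℕ → ℚ := fun i => if i = 0 then g.coeff 0 else g.coeff i - g.coeff (i - 1) with hcdef
  have cnonneg : ∀ i, 2 * i ≤ m → 0 ≤ c i := by
    intro i hi
    by_cases h : i = 0
    · simpa [hcdef, h] using h0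
    · have h1 : 1 ≤ i := by omega
      have key : g.coeff (i - 1) ≤ g.coeff i := by
        rcases lt_or_ge (i - 1) cc with hlt | hge
        · have := hinc (i - 1) hlt
          rwa [show i - 1 + 1 = i by omega] at this
        · have e1 := hpal (i - 1) (by omega)
          have e2 := anti i (m - (i - 1)) (by omega) (by omega)
          linarith
      simp only [hcdef, if_neg h]
      linarith
  have telescope : ∀ d : ℕ, ∑ i ∈ Finset.range (d + 1), c i = g.coeff d := by
    intro d
    induction d with
    | zero => simp [hcdef]
    | succ d ih =>
      rw [Finset.sum_range_succ, ih]
      have : c (d + 1) = g.coeff (d + 1) - g.coeff d := by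
        simp [hcdef]
      rw [this]
      ring
  have decomp : g.map (MvPolynomial.C : ℚ →+* MvPolynomial (Fin k) ℚ) * Polynomial.C E
      = ∑ i ∈ Finset.range (m / 2 + 1),
          Polynomial.C (MvPolynomial.C (c i) * E) * Polynomial.X ^ i
            * tnum ℚ k (m + 1 - 2 * i) := by
    refine Polynomial.ext fun j => ?_
    rw [Polynomial.finset_sum_coeff, Polynomial.coeff_mul_C, Polynomial.coeff_map]
    have hterm : ∀ i ∈ Finset.range (m / 2 + 1),
        (Polynomial.C (MvPolynomial.C (c i) * E) * Polynomial.X ^ i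
            * tnum ℚ k (m + 1 - 2 * i)).coeff j
        = if i ≤ j ∧ i + j ≤ m then MvPolynomial.C (c i) * E else 0 :=
      fun i _ => gen_coeff_m _ _ _ _
    rw [Finset.sum_congr rfl hterm]
    rcases le_or_gt j m with hj | hj
    · have hd : min j (m - j) ≤ m / 2 := by omega
      have step1 : ∀ i ∈ Finset.range (m / 2 + 1),
          (if i ≤ j ∧ i + j ≤ m then MvPolynomial.C (c i) * E else 0)
          = if i ∈ Finset.range (min j (m - j) + 1) then MvPolynomial.C (c i) * E else 0 := by
        intro i hi
        simp only [Finset.mem_range, Nat.lt_succ_iff, le_min_iff]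
        split_ifs <;> first | rfl | omega
      rw [Finset.sum_congr rfl step1, Finset.sum_ite_mem,
        Finset.inter_eq_right.mpr (Finset.range_subset_range.mpr (by omega))]
      rw [← Finset.sum_mul, ← map_sum, telescope]
      have : g.coeff (min j (m - j)) = g.coeff j := by
        rcases le_total j (m - j) with h | h
        · rw [min_eq_left h]
        · rw [min_eq_right h]
          exact (hpal j hj).symm
      rw [this]
    · rw [hzero j hj, map_zero, zero_mul]
      exact (Finset.sum_eq_zero fun i hi => by rw [if_neg (by omega)]).symm
  rw [decomp]
  refine AddSubmonoid.sum_mem _ fun i hi => AddSubmonoid.subset_closure ?_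
  exact ⟨MvPolynomial.C (c i) * E, i,
    eposx_smul (cnonneg i (by have := Finset.mem_range.1 hi; omega)) hE, rfl⟩

lemma good_dpiece (n : ℕ) (hn : 2 ≤ n) :
    Good k n (Polynomial.X * tnum ℚ k (n - 1) * Polynomial.C (esymm (Fin k) ℚ n)) := by
  refine AddSubmonoid.subset_closure ⟨esymm (Fin k) ℚ n, 1, eposx_esymm (by omega), ?_⟩
  rw [show n + 1 - 2 * 1 = n - 1 by omega, pow_one]
  ring

end GAux2

/-- If each `g_n(t)` is unimodal and palindromic with center `(n+r)/2` and
`D(x,t,z) · Σ_{n≥2} G_n z^n = Σ_{n≥2} g_n(t) e_n(x) z^n` with each `G_n` symmetric in `x`,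
then each `G_n` is e-unimodal and palindromic with center `(n+r)/2`. -/
theorem eUnimodal_of_palindromic_numerator (k : ℕ) (hk : 1 ≤ k) (r : ℤ) (hr : -2 ≤ r)
    (g : ℕ → Polynomial ℚ)
    (hg : ∀ n : ℕ, 2 ≤ n → UnimodalQ (g n) ∧ PalinZ (g n) ((n : ℤ) + r))
    (G : ℕ → Polynomial (MvPolynomial (Fin k) ℚ))
    (hGsymm : ∀ n : ℕ, 2 ≤ n → SymmX ℚ (G n))
    (hG : Dser ℚ k * PowerSeries.mk (fun n => if 2 ≤ n then G n else 0) =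
      PowerSeries.mk (fun n =>
        if 2 ≤ n then
          ((g n).map (MvPolynomial.C : ℚ →+* MvPolynomial (Fin k) ℚ)) *
            Polynomial.C (esymm (Fin k) ℚ n)
        else 0)) :
    ∀ n : ℕ, 2 ≤ n → EUnimodal ℚ (G n) ∧ PalinZ (G n) ((n : ℤ) + r) := by
  classical
  open EPAux TNAux GAux GAux2 in
  have hrec : ∀ n : ℕ, 2 ≤ n → G n =
      (g n).map (MvPolynomial.C : ℚ →+* MvPolynomial (Fin k) ℚ) * Polynomial.C (esymm (Fin k) ℚ n)
      + ∑ p ∈ (Finset.HasAntidiagonal.antidiagonal n).filter (fun p => 2 ≤ p.1 ∧ 2 ≤ p.2),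
          (Polynomial.X * tnum ℚ k (p.1 - 1) * Polynomial.C (esymm (Fin k) ℚ p.1)) * G p.2 := by
    intro n hn
    have h := congrArg (PowerSeries.coeff (R := Polynomial (MvPolynomial (Fin k) ℚ)) n) hG
    rw [PowerSeries.coeff_mul] at h
    simp only [Dser, PowerSeries.coeff_mk] at h
    rw [if_pos hn] at h
    rw [← Finset.sum_filter_add_sum_filter_not (Finset.HasAntidiagonal.antidiagonal n)
      (fun p => 2 ≤ p.1 ∧ 2 ≤ p.2)] at h
    have e1 : ∑ p ∈ (Finset.HasAntidiagonal.antidiagonal n).filter (fun p => 2 ≤ p.1 ∧ 2 ≤ p.2),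
        (if p.1 = 0 then 1 else if p.1 = 1 then 0
          else -(Polynomial.X * tnum ℚ k (p.1 - 1) * Polynomial.C (esymm (Fin k) ℚ p.1)))
        * (if 2 ≤ p.2 then G p.2 else 0)
        = -∑ p ∈ (Finset.HasAntidiagonal.antidiagonal n).filter (fun p => 2 ≤ p.1 ∧ 2 ≤ p.2),
            (Polynomial.X * tnum ℚ k (p.1 - 1) * Polynomial.C (esymm (Fin k) ℚ p.1)) * G p.2 := by
      rw [← Finset.sum_neg_distrib]
      refine Finset.sum_congr rfl fun p hp => ?_
      obtain ⟨hmem, hc⟩ := Finset.mem_filter.1 hp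
      rw [if_neg (by omega), if_neg (by omega), if_pos hc.2]
      ring
    have e2 : ∑ p ∈ (Finset.HasAntidiagonal.antidiagonal n).filter (fun p => ¬(2 ≤ p.1 ∧ 2 ≤ p.2)),
        (if p.1 = 0 then 1 else if p.1 = 1 then 0
          else -(Polynomial.X * tnum ℚ k (p.1 - 1) * Polynomial.C (esymm (Fin k) ℚ p.1)))
        * (if 2 ≤ p.2 then G p.2 else 0) = G n := by
      have hmem : ((0 : ℕ), n) ∈ (Finset.HasAntidiagonal.antidiagonal n).filter
          (fun p => ¬(2 ≤ p.1 ∧ 2 ≤ p.2)) := by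
        simp [Finset.HasAntidiagonal.mem_antidiagonal]
      rw [Finset.sum_eq_single_of_mem _ hmem ?_]
      · rw [if_pos rfl, if_pos hn, one_mul]
      · intro p hp hne
        obtain ⟨hmem', hc⟩ := Finset.mem_filter.1 hp
        have hsum := Finset.HasAntidiagonal.mem_antidiagonal.1 hmem'
        by_cases h0 : p.1 = 0
        · exfalso
          apply hne
          rcases p with ⟨p1, p2⟩
          simp only [Prod.mk.injEq]
          constructor <;> omega
        · by_cases h1 : p.1 = 1
          · rw [if_neg h0, if_pos h1, zero_mul]
          · rw [if_neg (fun hh : 2 ≤ p.2 => hc ⟨by omega, hh⟩), mul_zero]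
    rw [e1, e2] at h
    linear_combination h
  have main : ∀ n : ℕ, 2 ≤ n → Good k ((n : ℤ) + r).toNat (G n) := by
    intro n
    induction n using Nat.strong_induction_on with
    | _ n IH =>
      intro hn
      rw [hrec n hn]
      refine AddSubmonoid.add_mem _ ?_ (AddSubmonoid.sum_mem _ ?_)
      · have hpal : PalinZ (g n) ((((n : ℤ) + r).toNat : ℤ)) := by
          rw [Int.toNat_of_nonneg (by omega)]
          exact (hg n hn).2
        exact good_of_unimodal_palin (eposx_esymm (by omega)) (hg n hn).1 hpal
      · intro p hp
        obtain ⟨hmem, hc⟩ := Finset.mem_filter.1 hp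
        have hsum := Finset.HasAntidiagonal.mem_antidiagonal.1 hmem
        have h2 := good_mul (good_dpiece p.1 hc.1) (IH p.2 (by omega) hc.2)
        have he : p.1 + ((p.2 : ℤ) + r).toNat = ((n : ℤ) + r).toNat := by omega
        rwa [he] at h2
  intro n hn
  refine ⟨good_unimodal (main n hn), ?_⟩
  have h := good_palin (main n hn)
  rwa [Int.toNat_of_nonneg (by omega)] at h

end
end

section
/- For all n ≥ 1 and k ≥ 1, the following identities hold in ℤ[x_1,…,x_k,t]: W_n^<(x,t) = Σ_{σ ∈ S_n, σ(1)<σ(n)} t^{des(σ)} F_{n, [n−1]∖Des_{≥2}(σ^{−1})}(x_1,…,x_k) and W_n^>(x,t) = Σ_{σ ∈ S_n, σ(1)>σ(n)} t^{des(σ)} F_{n, [n−1]∖Asc_{≥2}(σ^{−1})}(x_1,…,x_k), where W_n^<(x,t) and W_n^>(x,t) are the sums of t^{des(w)} x_w over Smirnov words w of length n over [k] with w_1 < w_n and with w_1 > w_n respectively. (These are the expansions ω W_n^< = Σ t^{des(σ)} F_{n,Des_{≥2}(σ^{−1})} and ω W_n^> = Σ t^{des(σ)} F_{n,Asc_{≥2}(σ^{−1})},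 rewritten without the involution ω using ω F_{n,S} = F_{n,[n−1]∖S}.) -/
open Finset MvPolynomial Polynomial

attribute [local instance] Classical.propDecidable

noncomputable section

/-- The descent number of a word `w = w₁⋯wₙ` over the alphabet `[k]`:
the number of indices `i ∈ [n-1]` with `wᵢ > wᵢ₊₁`. -/
def desc {n k : ℕ} (w : Fin n → Fin k) : ℕ :=
  (Finset.univ.filter fun i : Fin n =>
    ∃ h : (i : ℕ) + 1 < n, w ⟨(i : ℕ) + 1, h⟩ < w i).card

/-- The cyclic descent number: the number of indices `i ∈ [n]` with `wᵢ > wᵢ₊₁`,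
where `wₙ₊₁ := w₁`. -/
def cdesc {n k : ℕ} (w : Fin n → Fin k) : ℕ :=
  (Finset.univ.filter fun i : Fin n =>
    w ⟨((i : ℕ) + 1) % n, Nat.mod_lt _ i.pos⟩ < w i).card

/-- A word is Smirnov if no two adjacent letters are equal. -/
def IsSmirnov {n k : ℕ} (w : Fin n → Fin k) : Prop :=
  ∀ i : Fin n, ∀ h : (i : ℕ) + 1 < n, w ⟨(i : ℕ) + 1, h⟩ ≠ w i

/-- the first letter is strictly smaller than the last letter -/
def FirstLtLast {n k : ℕ} (w : Fin n → Fin k) : Prop :=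
  ∃ h : 0 < n, w ⟨0, h⟩ < w ⟨n - 1, Nat.sub_lt h Nat.one_pos⟩

/-- the first letter is strictly larger than the last letter -/
def FirstGtLast {n k : ℕ} (w : Fin n → Fin k) : Prop :=
  ∃ h : 0 < n, w ⟨n - 1, Nat.sub_lt h Nat.one_pos⟩ < w ⟨0, h⟩

/-- the first letter equals the last letter -/
def FirstEqLast {n k : ℕ} (w : Fin n → Fin k) : Prop :=
  ∃ h : 0 < n, w ⟨0, h⟩ = w ⟨n - 1, Nat.sub_lt h Nat.one_pos⟩

/-- the first letter differs from the last letter -/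
def FirstNeLast {n k : ℕ} (w : Fin n → Fin k) : Prop :=
  ∃ h : 0 < n, w ⟨0, h⟩ ≠ w ⟨n - 1, Nat.sub_lt h Nat.one_pos⟩

/-- the monomial `x_w = x_{w₁}⋯x_{wₙ}` -/
def xw (R : Type) [CommRing R] {n k : ℕ} (w : Fin n → Fin k) : MvPolynomial (Fin k) R :=
  ∏ i, MvPolynomial.X (w i)

/-- Generic restricted Smirnov word enumerator: the sum of `t^(stat w) · x_w` over all
Smirnov words `w` of length `n` over `[k]` satisfying `P`, as a polynomial in `t`
with coefficients in `R[x₁,…,x_k]`. -/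
def smirnovEnum (R : Type) [CommRing R] (n k : ℕ) (stat : (Fin n → Fin k) → ℕ)
    (P : (Fin n → Fin k) → Prop) : Polynomial (MvPolynomial (Fin k) R) :=
  ∑ w ∈ Finset.univ.filter (fun w : Fin n → Fin k => IsSmirnov w ∧ P w),
    Polynomial.X ^ stat w * Polynomial.C (xw R w)

/-- `Des_{≥2}(σ) = {i ∈ [n-1] : σ(i) - σ(i+1) ≥ 2}`, recorded via 0-based gap positions:
gap `g ∈ {0,…,n-2}` corresponds to the adjacent pair `(σ g, σ (g+1))`. -/
def Des2 {n : ℕ} (σ : Equiv.Perm (Fin n)) : Finset ℕ :=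
  (Finset.range n).filter fun g =>
    ∃ h : g + 1 < n, (σ ⟨g + 1, h⟩ : ℕ) + 2 ≤ (σ ⟨g, Nat.lt_of_succ_lt h⟩ : ℕ)

/-- `Asc_{≥2}(σ) = {i ∈ [n-1] : σ(i+1) - σ(i) ≥ 2}`, recorded via 0-based gap positions. -/
def Asc2 {n : ℕ} (σ : Equiv.Perm (Fin n)) : Finset ℕ :=
  (Finset.range n).filter fun g =>
    ∃ h : g + 1 < n, (σ ⟨g, Nat.lt_of_succ_lt h⟩ : ℕ) + 2 ≤ (σ ⟨g + 1, h⟩ : ℕ)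

/-- `maj_{≥2}(σ) = Σ i` over the (1-based) positions `i ∈ [n-1]` with `σ(i+1) - σ(i) ≥ 2`;
a 0-based gap `g` corresponds to the 1-based position `g + 1`. -/
def maj2 {n : ℕ} (σ : Equiv.Perm (Fin n)) : ℕ :=
  ∑ g ∈ Asc2 σ, (g + 1)

/-- The Eulerian polynomial `A_m(t) = Σ_{σ ∈ S_m} t^{des σ}`. -/
def Eul (R : Type) [CommRing R] (m : ℕ) : Polynomial R :=
  ∑ σ : Equiv.Perm (Fin m), Polynomial.X ^ desc ⇑σ

/-- The fundamental quasisymmetric polynomial `F_{n,S}(x₁,…,x_k)`: the sum of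
`x_{f(1)}⋯x_{f(n)}` over weakly decreasing `f : [n] → [k]` which strictly decrease at the
positions of `S`; positions are 0-based gaps `g ∈ {0,…,n-2}`, gap `g` lying between
`f g` and `f (g+1)`. -/
def FQ (R : Type) [CommRing R] (k n : ℕ) (S : Finset ℕ) : MvPolynomial (Fin k) R :=
  ∑ f ∈ Finset.univ.filter (fun f : Fin n → Fin k =>
      (∀ i : Fin n, ∀ h : (i : ℕ) + 1 < n, f ⟨(i : ℕ) + 1, h⟩ ≤ f i) ∧
      (∀ i : Fin n, ∀ h : (i : ℕ) + 1 < n, (i : ℕ) ∈ S → f ⟨(i : ℕ) + 1, h⟩ < f i)),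
    ∏ i, MvPolynomial.X (f i)

/-- the full set `[n-1]` of gap positions, 0-based -/
def gapSet (n : ℕ) : Finset ℕ := Finset.range (n - 1)

namespace SmirnovProof

variable {n k : ℕ}

lemma finmk {a b : ℕ} (ha : a < n) (hb : b < n) (h : a = b) :
    (⟨a, ha⟩ : Fin n) = ⟨b, hb⟩ := by subst h; rfl

lemma chainLe (f : Fin n → Fin k)
    (hmono : ∀ g : Fin n, ∀ h : (g : ℕ) + 1 < n, f ⟨(g : ℕ) + 1, h⟩ ≤ f g) :
    ∀ v v' : Fin n, (v : ℕ) ≤ (v' : ℕ) → f v' ≤ f v := by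
  have H : ∀ m : ℕ, ∀ v : Fin n, ∀ h : (v : ℕ) + m < n, f ⟨(v : ℕ) + m, h⟩ ≤ f v := by
    intro m
    induction m with
    | zero =>
      intro v h
      have e : (⟨(v : ℕ) + 0, h⟩ : Fin n) = v := Fin.ext (by simp)
      rw [e]
    | succ m ih =>
      intro v h
      have h1 : (v : ℕ) + m < n := by omega
      have h2 := hmono ⟨(v : ℕ) + m, h1⟩ h
      exact le_trans h2 (ih v h1)
  intro v v' hle
  have h' : (v : ℕ) + ((v' : ℕ) - (v : ℕ)) < n := by omega
  have hv' : v' = ⟨(v : ℕ) + ((v' : ℕ) - (v : ℕ)), h'⟩ := Fin.ext (by simp; omega)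
  rw [hv']
  exact H _ v h'


lemma keyK (f : Fin n → Fin k) (d : Fin n → ℤ)
    (hmono : ∀ g : Fin n, ∀ h : (g : ℕ) + 1 < n, f ⟨(g : ℕ) + 1, h⟩ ≤ f g)
    (hstrict : ∀ g : Fin n, ∀ h : (g : ℕ) + 1 < n,
      d g < d ⟨(g : ℕ) + 1, h⟩ + 2 → f ⟨(g : ℕ) + 1, h⟩ < f g) :
    ∀ v v' : Fin n, (v : ℕ) < (v' : ℕ) →
      d v < d v' + 2 * (((v' : ℕ) : ℤ) - ((v : ℕ) : ℤ)) → f v' < f v := by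
  have H : ∀ m : ℕ, ∀ v : Fin n, ∀ h : (v : ℕ) + m + 1 < n,
      d v < d ⟨(v : ℕ) + m + 1, h⟩ + 2 * ((m : ℤ) + 1) → f ⟨(v : ℕ) + m + 1, h⟩ < f v := by
    intro m
    induction m with
    | zero =>
      intro v h hd
      exact hstrict v h (by push_cast at hd; linarith)
    | succ m ih =>
      intro v h hd
      have h1 : (v : ℕ) + 1 < n := by omega
      by_cases hs : d v < d ⟨(v : ℕ) + 1, h1⟩ + 2
      · have hstep := hstrict v h1 hs
        have hle : f ⟨(v : ℕ) + (m + 1) + 1, h⟩ ≤ f ⟨(v : ℕ) + 1, h1⟩ :=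
          chainLe f hmono _ _ (by simp)
        exact lt_of_le_of_lt hle hstep
      · push_neg at hs
        have h2 : ((⟨(v : ℕ) + 1, h1⟩ : Fin n) : ℕ) + m + 1 < n := by simp; omega
        have e : (⟨((⟨(v : ℕ) + 1, h1⟩ : Fin n) : ℕ) + m + 1, h2⟩ : Fin n)
            = ⟨(v : ℕ) + (m + 1) + 1, h⟩ := Fin.ext (by simp; omega)
        have := ih ⟨(v : ℕ) + 1, h1⟩ h2 (by rw [e]; push_cast; push_cast at hd; linarith)
        rw [e] at this
        exact lt_of_lt_of_le this (hmono v h1)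
  intro v v' hlt hd
  have h' : (v : ℕ) + ((v' : ℕ) - (v : ℕ) - 1) + 1 < n := by omega
  have hv' : v' = ⟨(v : ℕ) + ((v' : ℕ) - (v : ℕ) - 1) + 1, h'⟩ := Fin.ext (by simp; omega)
  rw [hv']
  apply H _ v h'
  rw [← hv']
  push_cast
  have : (((v' : ℕ) - (v : ℕ) - 1 : ℕ) : ℤ) = ((v' : ℕ) : ℤ) - ((v : ℕ) : ℤ) - 1 := by
    push_cast; omega
  rw [this]; linarith

lemma keyK2 (f : Fin n → Fin k) (d : Fin n → ℤ)
    (hmono : ∀ g : Fin n, ∀ h : (g : ℕ) + 1 < n, f ⟨(g : ℕ) + 1, h⟩ ≤ f g)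
    (hstrict : ∀ g : Fin n, ∀ h : (g : ℕ) + 1 < n,
      d g < d ⟨(g : ℕ) + 1, h⟩ + 2 → f ⟨(g : ℕ) + 1, h⟩ < f g) :
    ∀ v v' : Fin n, (v : ℕ) < (v' : ℕ) → ¬ (f v' < f v) →
      d v' + 2 * (((v' : ℕ) : ℤ) - ((v : ℕ) : ℤ)) ≤ d v := by
  intro v v' hlt hf
  by_contra hc
  push_neg at hc
  exact hf (keyK f d hmono hstrict v v' hlt hc)


/-- sorting key: sorting `keyf` ascending sorts `u` descending with `ε`-direction
tie-breaking. -/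
def keyf (ε : ℤ) (u : Fin n → Fin k) : Fin n → ℤ :=
  fun j => -(((u j : ℕ) : ℤ) * (2 * n + 2) + ε * ((j : ℕ) : ℤ))

variable {ε : ℤ} {u : Fin n → Fin k}

lemma eps_bound (hε : ε = 1 ∨ ε = -1) (a b : Fin n) :
    |ε * (((a : ℕ) : ℤ) - ((b : ℕ) : ℤ))| ≤ 2 * n := by
  have ha : ((a : ℕ) : ℤ) < n := by exact_mod_cast a.2
  have hb : ((b : ℕ) : ℤ) < n := by exact_mod_cast b.2
  have ha0 : (0 : ℤ) ≤ ((a : ℕ) : ℤ) := Int.natCast_nonneg _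
  have hb0 : (0 : ℤ) ≤ ((b : ℕ) : ℤ) := Int.natCast_nonneg _
  rcases hε with rfl | rfl <;> rw [abs_le] <;> constructor <;> linarith

lemma keyf_lt (hε : ε = 1 ∨ ε = -1) {a b : Fin n} (hu : u b < u a) :
    keyf ε u a < keyf ε u b := by
  have h1 : ((u b : ℕ) : ℤ) + 1 ≤ ((u a : ℕ) : ℤ) := by
    have : (u b : ℕ) < (u a : ℕ) := hu
    omega
  have hmul : (((u b : ℕ) : ℤ) + 1) * (2 * n + 2) ≤ ((u a : ℕ) : ℤ) * (2 * n + 2) :=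
    mul_le_mul_of_nonneg_right h1 (by positivity)
  have hb := eps_bound hε a b
  rw [abs_le] at hb
  simp only [keyf]
  have hn0 : (0 : ℤ) ≤ (n : ℤ) := Int.natCast_nonneg _
  nlinarith [hb.1, hb.2]

lemma keyf_sub_eq (hab : u a = u b) :
    keyf ε u b - keyf ε u a = ε * (((a : ℕ) : ℤ) - ((b : ℕ) : ℤ)) := by
  simp only [keyf, hab]; ring

lemma keyf_injective (hε : ε = 1 ∨ ε = -1) : Function.Injective (keyf ε u) := by
  intro a b hab
  rcases lt_trichotomy (u a) (u b) with h | h | h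
  · exact absurd hab.symm (ne_of_lt (keyf_lt hε h))
  · have := keyf_sub_eq (ε := ε) h
    rw [hab, sub_self] at this
    have : ((a : ℕ) : ℤ) = ((b : ℕ) : ℤ) := by
      rcases hε with rfl | rfl <;> linarith [this.symm]
    exact Fin.ext (by exact_mod_cast this)
  · exact absurd hab (ne_of_lt (keyf_lt hε h))

lemma u_le_of_keyf_le (hε : ε = 1 ∨ ε = -1) {a b : Fin n}
    (h : keyf ε u a ≤ keyf ε u b) : u b ≤ u a := by
  by_contra hc
  push_neg at hc
  exact absurd h (not_le.2 (keyf_lt hε hc))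

/-- the sorting permutation -/
def stdP (ε : ℤ) (u : Fin n → Fin k) : Equiv.Perm (Fin n) := Tuple.sort (keyf ε u)

lemma stdP_mono : Monotone (keyf ε u ∘ stdP ε u) := Tuple.monotone_sort _

lemma stdP_lt (hε : ε = 1 ∨ ε = -1) {a b : Fin n}
    (h : keyf ε u a < keyf ε u b) : (stdP ε u)⁻¹ a < (stdP ε u)⁻¹ b := by
  by_contra hc
  push_neg at hc
  have := stdP_mono (ε := ε) (u := u) hc
  simp only [Function.comp_apply, Equiv.Perm.inv_def, Equiv.apply_symm_apply] at this
  exact absurd h (not_lt.2 this)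


section Pair

variable {σ : Equiv.Perm (Fin n)} {f : Fin n → Fin k}

/-- strictness condition on `f` relative to `σ` and `ε` -/
def Pstrict (ε : ℤ) (σ : Equiv.Perm (Fin n)) (f : Fin n → Fin k) : Prop :=
  ∀ g : Fin n, ∀ h : (g : ℕ) + 1 < n,
    ε * (((σ⁻¹ g : Fin n) : ℕ) : ℤ) < ε * (((σ⁻¹ ⟨(g : ℕ) + 1, h⟩ : Fin n) : ℕ) : ℤ) + 2 →
      f ⟨(g : ℕ) + 1, h⟩ < f g

lemma pair_lt (hf1 : ∀ g : Fin n, ∀ h : (g : ℕ) + 1 < n, f ⟨(g : ℕ) + 1, h⟩ ≤ f g)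
    (hf2 : Pstrict ε σ f) {a b : Fin n} (hab : σ a < σ b)
    (hd : ε * ((a : ℕ) : ℤ) < ε * ((b : ℕ) : ℤ)
      + 2 * ((((σ b : Fin n) : ℕ) : ℤ) - (((σ a : Fin n) : ℕ) : ℤ))) :
    f (σ b) < f (σ a) := by
  have hK := keyK f (fun v => ε * (((σ⁻¹ v : Fin n) : ℕ) : ℤ)) hf1
    (fun g h hd' => hf2 g h hd') (σ a) (σ b) hab
  simp only [Equiv.Perm.inv_def, Equiv.symm_apply_apply] at hK
  exact hK hd

lemma pair_tie (hf1 : ∀ g : Fin n, ∀ h : (g : ℕ) + 1 < n, f ⟨(g : ℕ) + 1, h⟩ ≤ f g)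
    (hf2 : Pstrict ε σ f) {m m' : Fin n} (hmm : (m : ℕ) < (m' : ℕ)) (hf : f m = f m') :
    ε * (((σ⁻¹ m' : Fin n) : ℕ) : ℤ) + 2 * (((m' : ℕ) : ℤ) - ((m : ℕ) : ℤ))
      ≤ ε * (((σ⁻¹ m : Fin n) : ℕ) : ℤ) := by
  have hK := keyK2 f (fun v => ε * (((σ⁻¹ v : Fin n) : ℕ) : ℤ)) hf1
    (fun g h hd' => hf2 g h hd') m m' hmm (by rw [hf]; exact lt_irrefl _)
  exact hK

/-- adjacency dichotomy -/
lemma pair_dichot (hε : ε = 1 ∨ ε = -1)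
    (hf1 : ∀ g : Fin n, ∀ h : (g : ℕ) + 1 < n, f ⟨(g : ℕ) + 1, h⟩ ≤ f g)
    (hf2 : Pstrict ε σ f) (j : Fin n) (h : (j : ℕ) + 1 < n) :
    (f (σ ⟨(j : ℕ) + 1, h⟩) < f (σ j) ↔ σ j < σ ⟨(j : ℕ) + 1, h⟩) ∧
    (f (σ j) < f (σ ⟨(j : ℕ) + 1, h⟩) ↔ σ ⟨(j : ℕ) + 1, h⟩ < σ j) := by
  rcases lt_trichotomy (σ j) (σ ⟨(j : ℕ) + 1, h⟩) with hlt | heq | hgt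
  · have hΔ : (((σ j : Fin n) : ℕ) : ℤ) + 1 ≤ (((σ ⟨(j : ℕ) + 1, h⟩ : Fin n) : ℕ) : ℤ) := by
      have : ((σ j : Fin n) : ℕ) < ((σ ⟨(j : ℕ) + 1, h⟩ : Fin n) : ℕ) := hlt
      omega
    have hK := pair_lt hf1 hf2 hlt (by rcases hε with rfl | rfl <;> push_cast <;> linarith)
    exact ⟨⟨fun _ => hlt, fun _ => hK⟩,
      ⟨fun hc => absurd hK (not_lt.2 (le_of_lt hc)), fun hc => absurd hlt (not_lt.2 (le_of_lt hc))⟩⟩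
  · exact absurd (σ.injective heq) (by intro hc; have := congrArg Fin.val hc; simp at this)
  · have hΔ : (((σ ⟨(j : ℕ) + 1, h⟩ : Fin n) : ℕ) : ℤ) + 1 ≤ (((σ j : Fin n) : ℕ) : ℤ) := by
      have : ((σ ⟨(j : ℕ) + 1, h⟩ : Fin n) : ℕ) < ((σ j : Fin n) : ℕ) := hgt
      omega
    have hK := pair_lt hf1 hf2 hgt (by rcases hε with rfl | rfl <;> push_cast <;> linarith)
    exact ⟨⟨fun hc => absurd hK (not_lt.2 (le_of_lt hc)), fun hc => absurd hgt (not_lt.2 (le_of_lt hc))⟩,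
      ⟨fun _ => hgt, fun _ => hK⟩⟩

/-- endpoint comparison -/
lemma pair_endpoint (hn : 1 ≤ n) (hε : ε = 1 ∨ ε = -1)
    (hf1 : ∀ g : Fin n, ∀ h : (g : ℕ) + 1 < n, f ⟨(g : ℕ) + 1, h⟩ ≤ f g)
    (hf2 : Pstrict ε σ f)
    (hPσ : 0 < ε * ((((σ ⟨n - 1, by omega⟩ : Fin n) : ℕ) : ℤ)
      - (((σ ⟨0, by omega⟩ : Fin n) : ℕ) : ℤ))) :
    0 < ε * (((f (σ ⟨0, by omega⟩) : ℕ) : ℤ) - ((f (σ ⟨n - 1, by omega⟩) : ℕ) : ℤ)) := by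
  rcases hε with rfl | rfl
  · have hlt : σ ⟨0, by omega⟩ < σ ⟨n - 1, by omega⟩ := by
      have : (((σ ⟨0, by omega⟩ : Fin n) : ℕ) : ℤ) < ((σ ⟨n - 1, by omega⟩ : Fin n) : ℕ) := by
        linarith
      exact_mod_cast this
    have hΔ : (((σ ⟨0, by omega⟩ : Fin n) : ℕ) : ℤ) + 1
        ≤ (((σ ⟨n - 1, by omega⟩ : Fin n) : ℕ) : ℤ) := by
      have : ((σ ⟨0, by omega⟩ : Fin n) : ℕ) < ((σ ⟨n - 1, by omega⟩ : Fin n) : ℕ) := hlt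
      omega
    have hK := pair_lt hf1 hf2 hlt (by push_cast; linarith)
    have : ((f (σ ⟨n - 1, by omega⟩) : ℕ) : ℤ) < ((f (σ ⟨0, by omega⟩) : ℕ) : ℤ) := by
      exact_mod_cast hK
    linarith
  · have hlt : σ ⟨n - 1, by omega⟩ < σ ⟨0, by omega⟩ := by
      have : (((σ ⟨n - 1, by omega⟩ : Fin n) : ℕ) : ℤ) < ((σ ⟨0, by omega⟩ : Fin n) : ℕ) := by
        linarith
      exact_mod_cast this
    have hΔ : (((σ ⟨n - 1, by omega⟩ : Fin n) : ℕ) : ℤ) + 1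
        ≤ (((σ ⟨0, by omega⟩ : Fin n) : ℕ) : ℤ) := by
      have : ((σ ⟨n - 1, by omega⟩ : Fin n) : ℕ) < ((σ ⟨0, by omega⟩ : Fin n) : ℕ) := hlt
      omega
    have hb : (((σ ⟨n - 1, by omega⟩ : Fin n) : ℕ) : ℤ) ≤ n - 1 := by
      have := (σ ⟨n - 1, by omega⟩ : Fin n).2; omega
    have hb0 : (0 : ℤ) ≤ (((σ ⟨0, by omega⟩ : Fin n) : ℕ) : ℤ) := Int.natCast_nonneg _
    have hK := pair_lt hf1 hf2 hlt (by push_cast; linarith)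
    have : ((f (σ ⟨0, by omega⟩) : ℕ) : ℤ) < ((f (σ ⟨n - 1, by omega⟩) : ℕ) : ℤ) := by
      exact_mod_cast hK
    linarith

end Pair


section Std

variable {ε : ℤ} {u : Fin n → Fin k}

/-- weak decrease of the sorted word -/
lemma std_mono (hε : ε = 1 ∨ ε = -1) (g : Fin n) (h : (g : ℕ) + 1 < n) :
    u (stdP ε u ⟨(g : ℕ) + 1, h⟩) ≤ u (stdP ε u g) := by
  have hle : g ≤ (⟨(g : ℕ) + 1, h⟩ : Fin n) := by
    rw [Fin.le_def]; simp
  exact u_le_of_keyf_le hε (stdP_mono hle)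

/-- strictness of the sorted word at required gaps, given `u` is Smirnov -/
lemma std_strict (hε : ε = 1 ∨ ε = -1)
    (hsm : ∀ j : Fin n, ∀ h : (j : ℕ) + 1 < n, u ⟨(j : ℕ) + 1, h⟩ ≠ u j)
    (g : Fin n) (h : (g : ℕ) + 1 < n)
    (hd : ε * (((stdP ε u g : Fin n) : ℕ) : ℤ)
        < ε * (((stdP ε u ⟨(g : ℕ) + 1, h⟩ : Fin n) : ℕ) : ℤ) + 2) :
    u (stdP ε u ⟨(g : ℕ) + 1, h⟩) < u (stdP ε u g) := by
  set a := stdP ε u g with ha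
  set b := stdP ε u ⟨(g : ℕ) + 1, h⟩ with hb
  have hle : keyf ε u a ≤ keyf ε u b := stdP_mono (by rw [Fin.le_def]; simp)
  have hne : a ≠ b := by
    intro hc
    have := (stdP ε u).injective hc
    have := congrArg Fin.val this
    simp at this
  rcases lt_trichotomy (u b) (u a) with hlt | heq | hgt
  · exact hlt
  · exfalso
    have hsub := keyf_sub_eq (ε := ε) (u := u) heq.symm
    -- keyf b - keyf a = ε * (a - b)
    have h0 : (0 : ℤ) ≤ ε * (((a : ℕ) : ℤ) - ((b : ℕ) : ℤ)) := by
      rw [← hsub]; linarith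
    have hne' : ((a : ℕ) : ℤ) ≠ ((b : ℕ) : ℤ) := by
      intro hc
      exact hne (Fin.ext (by exact_mod_cast hc))
    have h1 : ε * (((a : ℕ) : ℤ) - ((b : ℕ) : ℤ)) = 1 := by
      rcases hε with rfl | rfl <;> push_cast at hd h0 hne' ⊢ <;> omega
    -- so the positions a b are adjacent with equal u values
    rcases hε with rfl | rfl
    · -- a = b + 1
      have hab : (a : ℕ) = (b : ℕ) + 1 := by push_cast at h1; omega
      have hbn : (b : ℕ) + 1 < n := hab ▸ a.2
      have := hsm b hbn
      rw [show (⟨(b : ℕ) + 1, hbn⟩ : Fin n) = a from Fin.ext (by simp [hab])] at this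
      exact this heq.symm
    · -- b = a + 1
      have hab : (b : ℕ) = (a : ℕ) + 1 := by push_cast at h1; omega
      have han : (a : ℕ) + 1 < n := hab ▸ b.2
      have := hsm a han
      rw [show (⟨(a : ℕ) + 1, han⟩ : Fin n) = b from Fin.ext (by simp [hab])] at this
      exact this heq
  · exact absurd hle (not_le.2 (keyf_lt hε hgt))

/-- endpoint condition transfers to the standardization -/
lemma std_endpoint (hn : 1 ≤ n) (hε : ε = 1 ∨ ε = -1)
    (hQ : 0 < ε * (((u ⟨0, by omega⟩ : ℕ) : ℤ) - ((u ⟨n - 1, by omega⟩ : ℕ) : ℤ))) :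
    0 < ε * (((((stdP ε u)⁻¹ ⟨n - 1, by omega⟩ : Fin n) : ℕ) : ℤ)
      - ((((stdP ε u)⁻¹ ⟨0, by omega⟩ : Fin n) : ℕ) : ℤ)) := by
  rcases hε with rfl | rfl
  · have hlt : u ⟨n - 1, by omega⟩ < u ⟨0, by omega⟩ := by
      have : ((u ⟨n - 1, by omega⟩ : ℕ) : ℤ) < ((u ⟨0, by omega⟩ : ℕ) : ℤ) := by linarith
      have : (u ⟨n - 1, by omega⟩ : ℕ) < (u ⟨0, by omega⟩ : ℕ) := by exact_mod_cast this
      exact this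
    have := stdP_lt (ε := 1) (Or.inl rfl) (keyf_lt (Or.inl rfl) hlt)
    have hv : (((stdP 1 u)⁻¹ ⟨0, by omega⟩ : Fin n) : ℕ)
        < (((stdP 1 u)⁻¹ ⟨n - 1, by omega⟩ : Fin n) : ℕ) := this
    push_cast
    omega
  · have hlt : u ⟨0, by omega⟩ < u ⟨n - 1, by omega⟩ := by
      have : ((u ⟨0, by omega⟩ : ℕ) : ℤ) < ((u ⟨n - 1, by omega⟩ : ℕ) : ℤ) := by linarith
      have : (u ⟨0, by omega⟩ : ℕ) < (u ⟨n - 1, by omega⟩ : ℕ) := by exact_mod_cast this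
      exact this
    have := stdP_lt (ε := -1) (Or.inr rfl) (keyf_lt (Or.inr rfl) hlt)
    have hv : (((stdP (-1) u)⁻¹ ⟨n - 1, by omega⟩ : Fin n) : ℕ)
        < (((stdP (-1) u)⁻¹ ⟨0, by omega⟩ : Fin n) : ℕ) := this
    push_cast
    omega

/-- uniqueness: any valid pair's permutation is the standardization -/
lemma std_unique {σ : Equiv.Perm (Fin n)} {f : Fin n → Fin k} (hε : ε = 1 ∨ ε = -1)
    (hf1 : ∀ g : Fin n, ∀ h : (g : ℕ) + 1 < n, f ⟨(g : ℕ) + 1, h⟩ ≤ f g)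
    (hf2 : Pstrict ε σ f) (hu : u = f ∘ σ) :
    stdP ε u = σ⁻¹ := by
  symm
  rw [stdP, Tuple.eq_sort_iff]
  constructor
  · intro m m' hle
    rcases eq_or_lt_of_le hle with heq | hlt
    · rw [heq]
    · have hval : (m : ℕ) < (m' : ℕ) := hlt
      have hum : u (σ⁻¹ m) = f m := by rw [hu]; simp
      have hum' : u (σ⁻¹ m') = f m' := by rw [hu]; simp
      have hfle : f m' ≤ f m := chainLe f hf1 m m' (le_of_lt hval)
      simp only [Function.comp_apply]
      rcases eq_or_lt_of_le hfle with hfeq | hflt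
      · -- tie: use pair_tie
        have htie := pair_tie hf1 hf2 hval hfeq.symm
        have hsub := keyf_sub_eq (ε := ε) (u := u)
          (show u (σ⁻¹ m) = u (σ⁻¹ m') by rw [hum, hum', hfeq])
        -- keyf (σ⁻¹ m') - keyf (σ⁻¹ m) = ε * (σ⁻¹ m - σ⁻¹ m')
        have hd : ((m' : ℕ) : ℤ) - ((m : ℕ) : ℤ) ≥ 1 := by push_cast; omega
        linarith
      · have := keyf_lt (u := u) hε (a := σ⁻¹ m) (b := σ⁻¹ m')
          (show u (σ⁻¹ m') < u (σ⁻¹ m) by rw [hum, hum']; exact hflt)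
        linarith
  · intro i j hij hkey
    have h1 : σ⁻¹ i = σ⁻¹ j := keyf_injective hε hkey
    have h2 : i = j := σ⁻¹.injective h1
    exact absurd h2 (ne_of_lt hij)

end Std


section Desc

lemma desc_rev (hn : 1 ≤ n) (w : Fin n → Fin k) :
    desc w = ((Finset.univ : Finset (Fin n)).filter (fun j : Fin n =>
      ∃ h : (j : ℕ) + 1 < n, (w ∘ Fin.rev) j < (w ∘ Fin.rev) ⟨(j : ℕ) + 1, h⟩)).card := by
  unfold desc
  apply Finset.card_nbij' (i := fun i : Fin n => (⟨n - 2 - (i : ℕ), by omega⟩ : Fin n))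
    (j := fun i : Fin n => (⟨n - 2 - (i : ℕ), by omega⟩ : Fin n))
  · intro a ha
    simp only [Finset.mem_coe, Finset.mem_filter, Finset.mem_univ, true_and] at ha ⊢
    obtain ⟨h, hlt⟩ := ha
    refine ⟨by omega, ?_⟩
    have e1 : (w ∘ Fin.rev) (⟨n - 2 - (a : ℕ), by omega⟩ : Fin n) = w ⟨(a : ℕ) + 1, h⟩ := by
      simp only [Function.comp_apply]
      exact congrArg w (Fin.ext (by simp [Fin.val_rev]; omega))
    have e2 : (w ∘ Fin.rev) (⟨n - 2 - (a : ℕ) + 1, by omega⟩ : Fin n) = w a := by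
      simp only [Function.comp_apply]
      exact congrArg w (Fin.ext (by simp [Fin.val_rev]; omega))
    rw [e1, e2]
    exact hlt
  · intro b hb
    simp only [Finset.mem_coe, Finset.mem_filter, Finset.mem_univ, true_and] at hb ⊢
    obtain ⟨h, hlt⟩ := hb
    refine ⟨by omega, ?_⟩
    have e1 : (w ∘ Fin.rev) b = w ⟨n - 2 - (b : ℕ) + 1, by omega⟩ := by
      simp only [Function.comp_apply]
      exact congrArg w (Fin.ext (by simp [Fin.val_rev]; omega))
    have e2 : (w ∘ Fin.rev) (⟨(b : ℕ) + 1, h⟩ : Fin n) = w ⟨n - 2 - (b : ℕ), by omega⟩ := by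
      simp only [Function.comp_apply]
      exact congrArg w (Fin.ext (by simp [Fin.val_rev]; omega))
    rw [e1, e2] at hlt
    exact hlt
  · intro a ha
    simp only [Finset.mem_coe, Finset.mem_filter, Finset.mem_univ, true_and] at ha
    obtain ⟨h, _⟩ := ha
    exact Fin.ext (by simp; omega)
  · intro b hb
    simp only [Finset.mem_coe, Finset.mem_filter, Finset.mem_univ, true_and] at hb
    obtain ⟨h, _⟩ := hb
    exact Fin.ext (by simp; omega)

variable {ε : ℤ} {σ : Equiv.Perm (Fin n)} {f : Fin n → Fin k}

lemma pair_ne (hε : ε = 1 ∨ ε = -1)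
    (hf1 : ∀ g : Fin n, ∀ h : (g : ℕ) + 1 < n, f ⟨(g : ℕ) + 1, h⟩ ≤ f g)
    (hf2 : Pstrict ε σ f) (j : Fin n) (h : (j : ℕ) + 1 < n) :
    f (σ ⟨(j : ℕ) + 1, h⟩) ≠ f (σ j) := by
  obtain ⟨h1, h2⟩ := pair_dichot hε hf1 hf2 j h
  rcases lt_trichotomy (σ j) (σ ⟨(j : ℕ) + 1, h⟩) with hlt | heq | hgt
  · exact ne_of_lt (h1.2 hlt)
  · exact absurd (σ.injective heq) (by intro hc; have := congrArg Fin.val hc; simp at this)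
  · exact ne_of_gt (h2.2 hgt)

lemma pair_desc (hn : 1 ≤ n) (hε : ε = 1 ∨ ε = -1)
    (hf1 : ∀ g : Fin n, ∀ h : (g : ℕ) + 1 < n, f ⟨(g : ℕ) + 1, h⟩ ≤ f g)
    (hf2 : Pstrict ε σ f) :
    desc (fun i => f (σ (Fin.rev i))) = desc ⇑σ := by
  rw [desc_rev hn]
  have hu : ∀ x : Fin n, ((fun i => f (σ (Fin.rev i))) ∘ Fin.rev) x = f (σ x) := by
    intro x; simp [Fin.rev_rev]
  have hfil : ((Finset.univ : Finset (Fin n)).filter (fun j : Fin n =>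
      ∃ h : (j : ℕ) + 1 < n, ((fun i => f (σ (Fin.rev i))) ∘ Fin.rev) j
        < ((fun i => f (σ (Fin.rev i))) ∘ Fin.rev) ⟨(j : ℕ) + 1, h⟩)) =
      ((Finset.univ : Finset (Fin n)).filter (fun j : Fin n =>
      ∃ h : (j : ℕ) + 1 < n, ⇑σ ⟨(j : ℕ) + 1, h⟩ < ⇑σ j)) := by
    apply Finset.filter_congr
    intro j _
    constructor
    · rintro ⟨h, hlt⟩
      rw [hu j, hu ⟨(j : ℕ) + 1, h⟩] at hlt
      exact ⟨h, (pair_dichot hε hf1 hf2 j h).2.1 hlt⟩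
    · rintro ⟨h, hlt⟩
      refine ⟨h, ?_⟩
      rw [hu j, hu ⟨(j : ℕ) + 1, h⟩]
      exact (pair_dichot hε hf1 hf2 j h).2.2 hlt
  rw [hfil]
  rfl

lemma smirnov_rev {w : Fin n → Fin k} (hsm : IsSmirnov w) :
    ∀ j : Fin n, ∀ h : (j : ℕ) + 1 < n, (w ∘ Fin.rev) ⟨(j : ℕ) + 1, h⟩ ≠ (w ∘ Fin.rev) j := by
  intro j h
  have h' : (n - 2 - (j : ℕ)) + 1 < n := by omega
  have := hsm ⟨n - 2 - (j : ℕ), by omega⟩ h'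
  have e1 : (w ∘ Fin.rev) (⟨(j : ℕ) + 1, h⟩ : Fin n) = w ⟨n - 2 - (j : ℕ), by omega⟩ := by
    simp only [Function.comp_apply]
    exact congrArg w (Fin.ext (by simp [Fin.val_rev]; omega))
  have e2 : (w ∘ Fin.rev) j = w ⟨(n - 2 - (j : ℕ)) + 1, h'⟩ := by
    simp only [Function.comp_apply]
    exact congrArg w (Fin.ext (by simp [Fin.val_rev]; omega))
  rw [e1, e2]
  exact fun hc => this hc.symm

end Desc


section Core

set_option maxHeartbeats 1000000 in
lemma core (n k : ℕ) (hn : 1 ≤ n) (ε : ℤ) (hε : ε = 1 ∨ ε = -1) :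
    ∑ w ∈ Finset.univ.filter (fun w : Fin n → Fin k => IsSmirnov w ∧
        0 < ε * (((w ⟨n - 1, by omega⟩ : ℕ) : ℤ) - ((w ⟨0, by omega⟩ : ℕ) : ℤ))),
      (Polynomial.X ^ desc w * Polynomial.C (xw ℤ w)) =
    ∑ σ ∈ Finset.univ.filter (fun σ : Equiv.Perm (Fin n) =>
        0 < ε * ((((σ ⟨n - 1, by omega⟩ : Fin n) : ℕ) : ℤ)
          - (((σ ⟨0, by omega⟩ : Fin n) : ℕ) : ℤ))),
      (Polynomial.X ^ desc ⇑σ * Polynomial.C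
        (∑ f ∈ Finset.univ.filter (fun f : Fin n → Fin k =>
          (∀ g : Fin n, ∀ h : (g : ℕ) + 1 < n, f ⟨(g : ℕ) + 1, h⟩ ≤ f g) ∧ Pstrict ε σ f),
        ∏ i, MvPolynomial.X (f i)) : Polynomial (MvPolynomial (Fin k) ℤ)) := by
  have hR : (∑ σ ∈ Finset.univ.filter (fun σ : Equiv.Perm (Fin n) =>
        0 < ε * ((((σ ⟨n - 1, by omega⟩ : Fin n) : ℕ) : ℤ)
          - (((σ ⟨0, by omega⟩ : Fin n) : ℕ) : ℤ))),
      (Polynomial.X ^ desc ⇑σ * Polynomial.C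
        (∑ f ∈ Finset.univ.filter (fun f : Fin n → Fin k =>
          (∀ g : Fin n, ∀ h : (g : ℕ) + 1 < n, f ⟨(g : ℕ) + 1, h⟩ ≤ f g) ∧ Pstrict ε σ f),
        ∏ i, MvPolynomial.X (f i)) : Polynomial (MvPolynomial (Fin k) ℤ)))
      = ∑ p ∈ (Finset.univ.filter (fun σ : Equiv.Perm (Fin n) =>
          0 < ε * ((((σ ⟨n - 1, by omega⟩ : Fin n) : ℕ) : ℤ)
            - (((σ ⟨0, by omega⟩ : Fin n) : ℕ) : ℤ)))).sigma
          (fun σ => Finset.univ.filter (fun f : Fin n → Fin k =>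
            (∀ g : Fin n, ∀ h : (g : ℕ) + 1 < n, f ⟨(g : ℕ) + 1, h⟩ ≤ f g) ∧ Pstrict ε σ f)),
          Polynomial.X ^ desc ⇑p.1 * Polynomial.C (∏ i, MvPolynomial.X (p.2 i)) := by
    rw [Finset.sum_sigma]
    exact Finset.sum_congr rfl fun σ _ => by rw [map_sum, Finset.mul_sum]
  rw [hR]
  refine (Finset.sum_nbij'
    (i := fun p : (Σ _ : Equiv.Perm (Fin n), Fin n → Fin k) =>
      (fun i : Fin n => p.2 (p.1 (Fin.rev i))))
    (j := fun w : Fin n → Fin k =>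
      (⟨(stdP ε (w ∘ Fin.rev))⁻¹, (w ∘ Fin.rev) ∘ ⇑(stdP ε (w ∘ Fin.rev))⟩ :
        Σ _ : Equiv.Perm (Fin n), Fin n → Fin k))
    ?_ ?_ ?_ ?_ ?_).symm
  · -- pairs map into words
    rintro ⟨σ, f⟩ hp
    simp only [Finset.mem_sigma, Finset.mem_filter, Finset.mem_univ, true_and] at hp
    obtain ⟨hPσ, hf1, hf2⟩ := hp
    simp only [Finset.mem_filter, Finset.mem_univ, true_and]
    constructor
    · -- Smirnov
      intro i h
      have h' : (n - 2 - (i : ℕ)) + 1 < n := by omega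
      have e1 : f (σ (Fin.rev (⟨(i : ℕ) + 1, h⟩ : Fin n)))
          = f (σ ⟨n - 2 - (i : ℕ), by omega⟩) := by
        exact congrArg (fun x => f (σ x)) (Fin.ext (by simp only [Fin.val_rev, Fin.val_mk]; omega))
      have e2 : f (σ (Fin.rev i)) = f (σ ⟨(n - 2 - (i : ℕ)) + 1, h'⟩) := by
        exact congrArg (fun x => f (σ x)) (Fin.ext (by simp only [Fin.val_rev, Fin.val_mk]; omega))
      have hne : f (σ (Fin.rev (⟨(i : ℕ) + 1, h⟩ : Fin n))) ≠ f (σ (Fin.rev i)) := by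
        rw [e1, e2]
        exact fun hc => pair_ne hε hf1 hf2 ⟨n - 2 - (i : ℕ), by omega⟩ h' hc.symm
      exact hne
    · -- endpoint
      have e1 : f (σ (Fin.rev (⟨n - 1, by omega⟩ : Fin n))) = f (σ ⟨0, by omega⟩) := by
        exact congrArg (fun x => f (σ x)) (Fin.ext (by simp only [Fin.val_rev, Fin.val_mk]; omega))
      have e2 : f (σ (Fin.rev (⟨0, by omega⟩ : Fin n))) = f (σ ⟨n - 1, by omega⟩) := by
        exact congrArg (fun x => f (σ x)) (Fin.ext (by simp only [Fin.val_rev, Fin.val_mk]))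
      have hres := pair_endpoint hn hε hf1 hf2 hPσ
      rw [← e1, ← e2] at hres
      exact hres
  · -- words map into pairs
    intro w hw
    simp only [Finset.mem_filter, Finset.mem_univ, true_and] at hw
    obtain ⟨hsm, hQ⟩ := hw
    have husm := smirnov_rev hsm
    simp only [Finset.mem_sigma, Finset.mem_filter, Finset.mem_univ, true_and]
    refine ⟨?_, ?_, ?_⟩
    · -- endpoint for the permutation
      apply std_endpoint hn hε
      have e1 : (w ∘ Fin.rev) (⟨0, by omega⟩ : Fin n) = w ⟨n - 1, by omega⟩ := by
        simp only [Function.comp_apply]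
        exact congrArg w (Fin.ext (by simp only [Fin.val_rev, Fin.val_mk]))
      have e2 : (w ∘ Fin.rev) (⟨n - 1, by omega⟩ : Fin n) = w ⟨0, by omega⟩ := by
        simp only [Function.comp_apply]
        exact congrArg w (Fin.ext (by simp only [Fin.val_rev, Fin.val_mk]; omega))
      rw [e1, e2]
      exact hQ
    · -- monotone
      intro g h
      exact std_mono hε g h
    · -- strictness
      intro g h hd
      simp only [inv_inv] at hd
      exact std_strict hε husm g h hd
  · -- left inverse
    rintro ⟨σ, f⟩ hp
    simp only [Finset.mem_sigma, Finset.mem_filter, Finset.mem_univ, true_and] at hp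
    obtain ⟨hPσ, hf1, hf2⟩ := hp
    have hu : ((fun i : Fin n => f (σ (Fin.rev i))) ∘ Fin.rev) = f ∘ ⇑σ := by
      funext x; simp [Fin.rev_rev]
    have hstd : stdP ε ((fun i : Fin n => f (σ (Fin.rev i))) ∘ Fin.rev) = σ⁻¹ := by
      rw [hu]
      exact std_unique hε hf1 hf2 rfl
    refine Sigma.ext ?_ ?_
    · show ((stdP ε ((fun i : Fin n => f (σ (Fin.rev i))) ∘ Fin.rev))⁻¹ : Equiv.Perm (Fin n)) = σ
      rw [hstd, inv_inv]
    · show HEq (((fun i : Fin n => f (σ (Fin.rev i))) ∘ Fin.rev)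
        ∘ ⇑(stdP ε ((fun i : Fin n => f (σ (Fin.rev i))) ∘ Fin.rev))) f
      rw [hstd, hu]
      exact heq_of_eq (by funext m; simp)
  · -- right inverse
    intro w hw
    funext i
    simp only [Function.comp_apply, Equiv.Perm.inv_def, Equiv.apply_symm_apply, Fin.rev_rev]
  · -- weights
    rintro ⟨σ, f⟩ hp
    simp only [Finset.mem_sigma, Finset.mem_filter, Finset.mem_univ, true_and] at hp
    obtain ⟨hPσ, hf1, hf2⟩ := hp
    have hdesc : desc (fun i : Fin n => f (σ (Fin.rev i))) = desc ⇑σ :=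
      pair_desc hn hε hf1 hf2
    have hprod : (xw ℤ (fun i : Fin n => f (σ (Fin.rev i))))
        = ∏ i, MvPolynomial.X (f i) := by
      show (∏ i, MvPolynomial.X (f ((Fin.revPerm.trans σ) i)) : MvPolynomial (Fin k) ℤ) = _
      exact Equiv.prod_comp (Fin.revPerm.trans σ) (fun v => MvPolynomial.X (f v))
    rw [hdesc, hprod]

end Core

end SmirnovProof

/-- Fundamental quasisymmetric expansions:
`W_n^< = Σ_{σ(1)<σ(n)} t^{des σ} F_{n, [n-1]∖Des_{≥2}(σ⁻¹)}` and
`W_n^> = Σ_{σ(1)>σ(n)} t^{des σ} F_{n, [n-1]∖Asc_{≥2}(σ⁻¹)}`. -/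
theorem smirnov_lt_gt_fundamental_expansion (n k : ℕ) (hn : 1 ≤ n) (hk : 1 ≤ k) :
    smirnovEnum ℤ n k desc FirstLtLast =
      (∑ σ ∈ Finset.univ.filter (fun σ : Equiv.Perm (Fin n) => FirstLtLast ⇑σ),
        Polynomial.X ^ desc ⇑σ * Polynomial.C (FQ ℤ k n (gapSet n \ Des2 σ⁻¹))) ∧
    smirnovEnum ℤ n k desc FirstGtLast =
      (∑ σ ∈ Finset.univ.filter (fun σ : Equiv.Perm (Fin n) => FirstGtLast ⇑σ),
        Polynomial.X ^ desc ⇑σ * Polynomial.C (FQ ℤ k n (gapSet n \ Asc2 σ⁻¹))) := by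
  constructor
  · -- the `<` case, ε = 1
    have hcore := SmirnovProof.core n k hn 1 (Or.inl rfl)
    unfold smirnovEnum
    refine Eq.trans ?_ (Eq.trans hcore ?_)
    · refine Finset.sum_congr (Finset.filter_congr fun w _ => ?_) fun _ _ => rfl
      apply and_congr_right
      intro _
      constructor
      · rintro ⟨h0, hlt⟩
        have hv : ((w ⟨0, h0⟩ : Fin k) : ℕ)
            < ((w ⟨n - 1, Nat.sub_lt h0 Nat.one_pos⟩ : Fin k) : ℕ) := hlt
        have hgoal : (0 : ℤ) < 1 * ((((w ⟨n - 1, Nat.sub_lt h0 Nat.one_pos⟩ : Fin k) : ℕ) : ℤ)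
            - (((w ⟨0, h0⟩ : Fin k) : ℕ) : ℤ)) := by omega
        exact hgoal
      · intro hc
        have h0 : 0 < n := hn
        have hv : (0 : ℤ) < 1 * ((((w ⟨n - 1, Nat.sub_lt h0 Nat.one_pos⟩ : Fin k) : ℕ) : ℤ)
            - (((w ⟨0, h0⟩ : Fin k) : ℕ) : ℤ)) := hc
        have hlt : ((w ⟨0, h0⟩ : Fin k) : ℕ)
            < ((w ⟨n - 1, Nat.sub_lt h0 Nat.one_pos⟩ : Fin k) : ℕ) := by omega
        exact ⟨h0, hlt⟩
    · refine Finset.sum_congr (Finset.filter_congr fun σ _ => ?_) fun σ hσ => ?_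
      · constructor
        · intro hc
          have h0 : 0 < n := hn
          have hv : (0 : ℤ) < 1 * ((((σ ⟨n - 1, Nat.sub_lt h0 Nat.one_pos⟩ : Fin n) : ℕ) : ℤ)
              - (((σ ⟨0, h0⟩ : Fin n) : ℕ) : ℤ)) := hc
          have hlt : ((σ ⟨0, h0⟩ : Fin n) : ℕ)
              < ((σ ⟨n - 1, Nat.sub_lt h0 Nat.one_pos⟩ : Fin n) : ℕ) := by omega
          exact ⟨h0, hlt⟩
        · rintro ⟨h0, hlt⟩
          have hv : ((σ ⟨0, h0⟩ : Fin n) : ℕ)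
              < ((σ ⟨n - 1, Nat.sub_lt h0 Nat.one_pos⟩ : Fin n) : ℕ) := hlt
          have hgoal : (0 : ℤ) < 1 * ((((σ ⟨n - 1, Nat.sub_lt h0 Nat.one_pos⟩ : Fin n) : ℕ) : ℤ)
              - (((σ ⟨0, h0⟩ : Fin n) : ℕ) : ℤ)) := by omega
          exact hgoal
      · congr 1
        congr 1
        unfold FQ
        refine Finset.sum_congr (Finset.filter_congr fun f _ => ?_) fun _ _ => rfl
        apply and_congr_right
        intro _
        constructor
        · -- Pstrict → membership version
          intro H i h hmem
          apply H i h
          rw [Finset.mem_sdiff] at hmem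
          obtain ⟨-, hnot⟩ := hmem
          have hnot' : ¬ (((σ⁻¹ ⟨(i : ℕ) + 1, h⟩ : Fin n) : ℕ) + 2
              ≤ ((σ⁻¹ i : Fin n) : ℕ)) := by
            intro hcon
            apply hnot
            rw [Des2, Finset.mem_filter, Finset.mem_range]
            exact ⟨i.2, h, hcon⟩
          omega
        · -- membership version → Pstrict
          intro H g h hd
          apply H g h
          rw [Finset.mem_sdiff]
          refine ⟨?_, ?_⟩
          · rw [gapSet, Finset.mem_range]; omega
          · intro hmem
            rw [Des2, Finset.mem_filter] at hmem
            obtain ⟨-, h', hcon⟩ := hmem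
            have hcon' : ((σ⁻¹ ⟨(g : ℕ) + 1, h⟩ : Fin n) : ℕ) + 2
                ≤ ((σ⁻¹ g : Fin n) : ℕ) := hcon
            omega
  · -- the `>` case, ε = -1
    have hcore := SmirnovProof.core n k hn (-1) (Or.inr rfl)
    unfold smirnovEnum
    refine Eq.trans ?_ (Eq.trans hcore ?_)
    · refine Finset.sum_congr (Finset.filter_congr fun w _ => ?_) fun _ _ => rfl
      apply and_congr_right
      intro _
      constructor
      · rintro ⟨h0, hlt⟩
        have hv : ((w ⟨n - 1, Nat.sub_lt h0 Nat.one_pos⟩ : Fin k) : ℕ)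
            < ((w ⟨0, h0⟩ : Fin k) : ℕ) := hlt
        have hgoal : (0 : ℤ) < -1 * ((((w ⟨n - 1, Nat.sub_lt h0 Nat.one_pos⟩ : Fin k) : ℕ) : ℤ)
            - (((w ⟨0, h0⟩ : Fin k) : ℕ) : ℤ)) := by omega
        exact hgoal
      · intro hc
        have h0 : 0 < n := hn
        have hv : (0 : ℤ) < -1 * ((((w ⟨n - 1, Nat.sub_lt h0 Nat.one_pos⟩ : Fin k) : ℕ) : ℤ)
            - (((w ⟨0, h0⟩ : Fin k) : ℕ) : ℤ)) := hc
        have hlt : ((w ⟨n - 1, Nat.sub_lt h0 Nat.one_pos⟩ : Fin k) : ℕ)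
            < ((w ⟨0, h0⟩ : Fin k) : ℕ) := by omega
        exact ⟨h0, hlt⟩
    · refine Finset.sum_congr (Finset.filter_congr fun σ _ => ?_) fun σ hσ => ?_
      · constructor
        · intro hc
          have h0 : 0 < n := hn
          have hv : (0 : ℤ) < -1 * ((((σ ⟨n - 1, Nat.sub_lt h0 Nat.one_pos⟩ : Fin n) : ℕ) : ℤ)
              - (((σ ⟨0, h0⟩ : Fin n) : ℕ) : ℤ)) := hc
          have hlt : ((σ ⟨n - 1, Nat.sub_lt h0 Nat.one_pos⟩ : Fin n) : ℕ)
              < ((σ ⟨0, h0⟩ : Fin n) : ℕ) := by omega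
          exact ⟨h0, hlt⟩
        · rintro ⟨h0, hlt⟩
          have hv : ((σ ⟨n - 1, Nat.sub_lt h0 Nat.one_pos⟩ : Fin n) : ℕ)
              < ((σ ⟨0, h0⟩ : Fin n) : ℕ) := hlt
          have hgoal : (0 : ℤ) < -1 * ((((σ ⟨n - 1, Nat.sub_lt h0 Nat.one_pos⟩ : Fin n) : ℕ) : ℤ)
              - (((σ ⟨0, h0⟩ : Fin n) : ℕ) : ℤ)) := by omega
          exact hgoal
      · congr 1
        congr 1
        unfold FQ
        refine Finset.sum_congr (Finset.filter_congr fun f _ => ?_) fun _ _ => rfl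
        apply and_congr_right
        intro _
        constructor
        · intro H i h hmem
          apply H i h
          rw [Finset.mem_sdiff] at hmem
          obtain ⟨-, hnot⟩ := hmem
          have hnot' : ¬ (((σ⁻¹ i : Fin n) : ℕ) + 2
              ≤ ((σ⁻¹ ⟨(i : ℕ) + 1, h⟩ : Fin n) : ℕ)) := by
            intro hcon
            apply hnot
            rw [Asc2, Finset.mem_filter, Finset.mem_range]
            exact ⟨i.2, h, hcon⟩
          omega
        · intro H g h hd
          apply H g h
          rw [Finset.mem_sdiff]
          refine ⟨?_, ?_⟩
          · rw [gapSet, Finset.mem_range]; omega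
          · intro hmem
            rw [Asc2, Finset.mem_filter] at hmem
            obtain ⟨-, h', hcon⟩ := hmem
            have hcon' : ((σ⁻¹ g : Fin n) : ℕ) + 2
                ≤ ((σ⁻¹ ⟨(g : ℕ) + 1, h⟩ : Fin n) : ℕ) := hcon
            omega


end
end

section
/- For all n ≥ 1 and k ≥ 1, the following identity holds in ℤ[x_1,…,x_k,t]: W̃_n(x,t) = Σ_{σ ∈ S_n} t^{cdes(σ)} F_{n, [n−1]∖Des_{≥2}(σ^{−1})}(x_1,…,x_k), where W̃_n(x,t) := Σ_w t^{cdes(w)} x_w, the sum over all Smirnov words w of length n over [k]. (This is the expansion ω W̃_n = Σ_{σ∈S_n} t^{cdes(σ)} F_{n,Des_{≥2}(σ^{−1})}, rewritten without the involution ω using ω F_{n,S} = F_{n,[n−1]∖S}.) -/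
open Finset MvPolynomial Polynomial

attribute [local instance] Classical.propDecidable

noncomputable section

/-!
Sort the letters of a Smirnov word `w` stably into weakly decreasing order: `f = w ∘ ρ`, and
`σ := ρ⁻¹ ∘ rev` gives `w = f ∘ σ ∘ rev`. Equal consecutive letters of `f` come from positions of
`w` in increasing order (stability) that are not adjacent (Smirnov), which says exactly that `f`
is strict at every gap outside `Des_{≥2}(σ⁻¹)`. Conversely every such pair `(σ, f)` gives a
Smirnov word, and uniqueness of the stable sort makes the two maps inverse. The monomial is
unchanged, and since `f ∘ σ` can tie only at positions that are not cyclically adjacent, a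
cyclic descent of `σ` at `i` is the same as a cyclic descent of `w` at `rev (i + 1)`.
-/

open Equiv OrderDual

section

variable {n : ℕ} {α : Type*}

theorem Fin.antitone_iff_forall_mk_succ_le [Preorder α] {f : Fin n → α} :
    Antitone f ↔ ∀ i : Fin n, ∀ h : (i : ℕ) + 1 < n, f ⟨(i : ℕ) + 1, h⟩ ≤ f i := by
  cases n with
  | zero => exact ⟨fun _ i => i.elim0, fun _ i => i.elim0⟩
  | succ m =>
    rw [Fin.antitone_iff_succ_le]
    exact ⟨fun hf i h => hf ⟨i, by omega⟩, fun hf i => hf i.castSucc (by simp)⟩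

theorem Fin.mk_mod_eq_finRotate (i : Fin n) :
    (⟨((i : ℕ) + 1) % n, Nat.mod_lt _ i.pos⟩ : Fin n) = finRotate n i := by
  have := i.neZero
  ext
  rw [finRotate_apply, Fin.val_add, Fin.val_one', Nat.add_mod_mod]

theorem Fin.finRotate_rev_finRotate (i : Fin n) :
    finRotate n (Fin.rev (finRotate n i)) = Fin.rev i := by
  have := i.neZero
  simp only [finRotate_apply, Fin.rev_add, sub_add_cancel]

theorem Fin.val_finRotate_le (i : Fin n) : (finRotate n i : ℕ) ≤ i + 1 := by
  rw [← Fin.mk_mod_eq_finRotate]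
  exact Nat.mod_le _ _

theorem cdesc_eq_card {k : ℕ} (w : Fin n → Fin k) :
    cdesc w = #{i | w (finRotate n i) < w i} := by
  simp only [cdesc, Fin.mk_mod_eq_finRotate]

def IsCompatible [Preorder α] (σ : Perm (Fin n)) (f : Fin n → α) : Prop :=
  Antitone f ∧ ∀ i : Fin n, ∀ h : (i : ℕ) + 1 < n,
    f ⟨(i : ℕ) + 1, h⟩ = f i → (σ⁻¹ ⟨(i : ℕ) + 1, h⟩ : ℕ) + 2 ≤ σ⁻¹ i

theorem fq_condition_iff_isCompatible [LinearOrder α] (σ : Perm (Fin n)) (f : Fin n → α) :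
    ((∀ i : Fin n, ∀ h : (i : ℕ) + 1 < n, f ⟨(i : ℕ) + 1, h⟩ ≤ f i) ∧
      (∀ i : Fin n, ∀ h : (i : ℕ) + 1 < n,
        (i : ℕ) ∈ gapSet n \ Des2 σ⁻¹ → f ⟨(i : ℕ) + 1, h⟩ < f i)) ↔ IsCompatible σ f := by
  rw [IsCompatible, ← Fin.antitone_iff_forall_mk_succ_le]
  refine and_congr_right fun hf => forall₂_congr fun i h => ?_
  have hle := hf (show i ≤ ⟨(i : ℕ) + 1, h⟩ from Fin.mk_le_mk.mpr (by omega))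
  simp only [gapSet, Des2, mem_sdiff, mem_range, mem_filter, not_and, not_exists, not_le, Fin.eta]
  constructor
  · intro hlt heq
    by_contra hsmall
    exact (hlt ⟨by omega, fun _ => by omega⟩).ne heq
  · rintro hdes ⟨-, hsmall⟩
    refine lt_of_le_of_ne hle fun heq => ?_
    have := hsmall i.2 h
    have := hdes heq
    omega

def descPerm [LinearOrder α] (w : Fin n → α) : Perm (Fin n) := Tuple.sort (toDual ∘ w)

def wordOf (σ : Perm (Fin n)) (f : Fin n → α) : Fin n → α := fun i => f (σ (Fin.rev i))

theorem wordOf_comp_revPerm_mul_inv (σ : Perm (Fin n)) (f : Fin n → α) :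
    wordOf σ f ∘ ⇑(Fin.revPerm * σ⁻¹ : Perm (Fin n)) = f := by
  ext i
  simp [wordOf]

namespace IsCompatible

variable [PartialOrder α] {σ : Perm (Fin n)} {f : Fin n → α}

theorem inv_add_two_le (hσf : IsCompatible σ f) {p q : Fin n} (hpq : p < q) (hf : f p = f q) :
    (σ⁻¹ q : ℕ) + 2 ≤ σ⁻¹ p := by
  obtain ⟨p, hp⟩ := p
  obtain ⟨q, hq⟩ := q
  rw [Fin.mk_lt_mk] at hpq
  induction q, hpq using Nat.le_induction with
  | base => exact hσf.2 ⟨p, hp⟩ hq hf.symm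
  | succ q hpq ih =>
    have hmid : f ⟨q, by omega⟩ = f ⟨q + 1, hq⟩ :=
      le_antisymm (hf ▸ hσf.1 (Fin.mk_le_mk.mpr (by omega)))
        (hσf.1 (Fin.mk_le_mk.mpr (by omega)))
    have hstep : (σ⁻¹ ⟨q + 1, hq⟩ : ℕ) + 2 ≤ σ⁻¹ ⟨q, by omega⟩ :=
      hσf.2 ⟨q, by omega⟩ hq hmid.symm
    have := ih (by omega) (hf.trans hmid.symm)
    omega

theorem lt_iff (hσf : IsCompatible σ f) {a b : Fin n} (hba : (b : ℕ) ≤ a + 1) :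
    f (σ a) < f (σ b) ↔ σ b < σ a := by
  refine ⟨hσf.1.reflect_lt, fun hlt => lt_of_le_of_ne (hσf.1 hlt.le) fun heq => ?_⟩
  have := hσf.inv_add_two_le hlt heq.symm
  simp only [Perm.coe_inv, symm_apply_apply] at this
  omega

theorem isSmirnov_wordOf {k : ℕ} {f : Fin n → Fin k} (hσf : IsCompatible σ f) :
    IsSmirnov (wordOf σ f) := by
  intro i h heq
  set a := Fin.rev (⟨(i : ℕ) + 1, h⟩ : Fin n)
  set b := Fin.rev i
  have hab : (b : ℕ) = a + 1 := by simp only [a, b, Fin.val_rev]; omega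
  rcases (σ.injective.ne (Fin.ne_of_val_ne (by omega) : a ≠ b)).lt_or_gt with hlt | hlt
  · exact ((hσf.lt_iff (by omega)).2 hlt).ne heq.symm
  · exact ((hσf.lt_iff (by omega)).2 hlt).ne heq

theorem cdesc_wordOf {k : ℕ} {f : Fin n → Fin k} (hσf : IsCompatible σ f) :
    cdesc (wordOf σ f) = cdesc σ := by
  rw [cdesc_eq_card, cdesc_eq_card]
  refine (Finset.card_equiv ((finRotate n).trans Fin.revPerm) fun j => ?_).symm
  simp only [mem_filter_univ, trans_apply, Fin.revPerm_apply]
  simp only [wordOf, Fin.finRotate_rev_finRotate, Fin.rev_rev]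
  exact (hσf.lt_iff (Fin.val_finRotate_le j)).symm

end IsCompatible

theorem IsCompatible.descPerm_wordOf [LinearOrder α] {σ : Perm (Fin n)} {f : Fin n → α}
    (hσf : IsCompatible σ f) :
    descPerm (wordOf σ f) = Fin.revPerm * σ⁻¹ := by
  refine (Tuple.eq_sort_iff.mpr ⟨?_, fun i j hij heq => ?_⟩).symm
  · rw [Function.comp_assoc, wordOf_comp_revPerm_mul_inv]
    exact hσf.1.dual_right
  · have hf : f i = f j := by
      rw [← wordOf_comp_revPerm_mul_inv σ f]
      simpa only [Function.comp_apply, toDual_inj] using heq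
    have := hσf.inv_add_two_le hij hf
    simp only [Perm.coe_mul, Function.comp_apply, Fin.revPerm_apply, Fin.rev_lt_rev]
    exact Fin.lt_def.mpr (by omega)

theorem IsSmirnov.isCompatible {k : ℕ} {w : Fin n → Fin k} (hw : IsSmirnov w) :
    IsCompatible ((descPerm w)⁻¹ * Fin.revPerm) (w ∘ descPerm w) := by
  set ρ := descPerm w
  have hstable := (Tuple.eq_sort_iff.mp (rfl : ρ = Tuple.sort (toDual ∘ w))).2
  refine ⟨(Tuple.monotone_sort (toDual ∘ w)).dual_right, fun i h heq => ?_⟩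
  have hlt : ρ i < ρ ⟨(i : ℕ) + 1, h⟩ :=
    hstable i _ (Fin.mk_lt_mk.mpr (by omega)) (congrArg toDual heq.symm)
  have hne : (ρ ⟨(i : ℕ) + 1, h⟩ : ℕ) ≠ ρ i + 1 := fun hadj =>
    hw (ρ i) (by omega) <| by
      rwa [show ⟨(ρ i : ℕ) + 1, _⟩ = ρ ⟨(i : ℕ) + 1, h⟩ from Fin.ext hadj.symm]
  simp only [mul_inv_rev, inv_inv, Perm.coe_mul, Function.comp_apply, Perm.coe_inv,
    Fin.revPerm_symm, Fin.revPerm_apply, Fin.val_rev]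
  rw [Fin.lt_def] at hlt
  omega

theorem wordOf_descPerm [LinearOrder α] (w : Fin n → α) :
    wordOf ((descPerm w)⁻¹ * Fin.revPerm) (w ∘ descPerm w) = w := by
  ext i
  simp [wordOf]

theorem xw_wordOf (R : Type) [CommRing R] {k : ℕ} (σ : Perm (Fin n)) (f : Fin n → Fin k) :
    xw R (wordOf σ f) = xw R f :=
  Equiv.prod_comp (Fin.revPerm.trans σ) fun j => MvPolynomial.X (f j)

theorem fq_gapSet_sdiff_des2_eq_sum (R : Type) [CommRing R] (k : ℕ) (σ : Perm (Fin n)) :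
    FQ R k n (gapSet n \ Des2 σ⁻¹) = ∑ f ∈ univ.filter (IsCompatible σ), xw R f := by
  simp only [FQ, xw, fq_condition_iff_isCompatible]

end

theorem cyclic_smirnov_fundamental_expansion_general (n k : ℕ) :
    smirnovEnum ℤ n k cdesc (fun _ => True) =
      ∑ σ : Equiv.Perm (Fin n),
        Polynomial.X ^ cdesc ⇑σ * Polynomial.C (FQ ℤ k n (gapSet n \ Des2 σ⁻¹)) := by
  simp only [fq_gapSet_sdiff_des2_eq_sum, map_sum, Finset.mul_sum, Finset.sum_sigma', smirnovEnum,
    and_true]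
  refine Finset.sum_nbij' (fun w => ⟨(descPerm w)⁻¹ * Fin.revPerm, w ∘ descPerm w⟩)
    (fun p => wordOf p.1 p.2) ?_ ?_ ?_ ?_ ?_
  · simp only [mem_filter, mem_univ, true_and, mem_sigma]
    exact fun w hw => hw.isCompatible
  · rintro ⟨σ, f⟩ h
    simp only [mem_sigma, mem_univ, mem_filter, true_and] at h ⊢
    exact h.isSmirnov_wordOf
  · exact fun w _ => wordOf_descPerm w
  · rintro ⟨σ, f⟩ h
    simp only [mem_sigma, mem_univ, mem_filter, true_and] at h
    rw [h.descPerm_wordOf, wordOf_comp_revPerm_mul_inv]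
    simp only [mul_inv_rev, inv_inv, mul_assoc, inv_mul_cancel, mul_one]
  · intro w hw
    simp only [mem_filter, mem_univ, true_and] at hw
    dsimp only
    rw [← hw.isCompatible.cdesc_wordOf,
      ← xw_wordOf ℤ ((descPerm w)⁻¹ * Fin.revPerm) (w ∘ descPerm w), wordOf_descPerm]

/-- `W̃_n = Σ_{σ ∈ S_n} t^{cdes σ} F_{n, [n-1]∖Des_{≥2}(σ⁻¹)}`. -/
theorem cyclic_smirnov_fundamental_expansion (n k : ℕ) (hn : 1 ≤ n) (hk : 1 ≤ k) :
    smirnovEnum ℤ n k cdesc (fun _ => True) =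
      ∑ σ : Equiv.Perm (Fin n),
        Polynomial.X ^ cdesc ⇑σ * Polynomial.C (FQ ℤ k n (gapSet n \ Des2 σ⁻¹)) :=
  cyclic_smirnov_fundamental_expansion_general n k

end
end

section
/- For all integers m ≥ 1 and n ≥ 1, the following identities hold in ℤ[t]: (i) Σ_w t^{des(w)}, summed over all Smirnov words w of length n over [m] with w_1 < w_n, equals Σ_{σ ∈ S_n, σ(1)<σ(n)} t^{des(σ)} · C(m + |Des_{≥2}(σ^{−1})|, n); (ii) Σ_w t^{cdes(w)}, summed over all Smirnov words w of length n over [m], equals Σ_{σ ∈ S_n} t^{cdes(σ)} · C(m + |Des_{≥2}(σ^{−1})|, n); here C(a,b) denotes the binomial coefficient. -/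
open Finset MvPolynomial Polynomial

attribute [local instance] Classical.propDecidable

noncomputable section

/-!
Standardizing a Smirnov word `w` (ranking positions by letter, equal letters from right to
left) gives a permutation `τ` with the same descents, cyclic descents and comparison of first
and last letter, since equal letters of `w` are never adjacent. Writing `w = v ∘ τ`, the words
with standardization `τ` correspond to the weakly increasing `v : [n] → [m]` whose ties occur
only across gaps in `Des_{≥2}(τ⁻¹)`; adding to `v i` the number of such gaps before `i` turns
these into the `n`-subsets of `[m + |Des_{≥2}(τ⁻¹)|]`.
-/

namespace Fin

variable {n : ℕ} {α : Type*} [Preorder α]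

lemma monotone_of_le_next {f : Fin n → α}
    (h : ∀ g (hg : g + 1 < n), f ⟨g, by omega⟩ ≤ f ⟨g + 1, hg⟩) : Monotone f := by
  cases n with
  | zero => exact fun a => a.elim0
  | succ k => exact Fin.monotone_iff_le_succ.mpr fun i => h i (by simp)

lemma strictMono_iff_lt_next {f : Fin n → α} :
    StrictMono f ↔ ∀ g (hg : g + 1 < n), f ⟨g, by omega⟩ < f ⟨g + 1, hg⟩ := by
  refine ⟨fun hf g hg => hf (by simp [Fin.lt_def]), fun h => ?_⟩
  cases n with
  | zero => exact fun a => a.elim0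
  | succ k => exact Fin.strictMono_iff_lt_succ.mpr fun i => h i (by simp)

end Fin

lemma card_filter_strictMono (n N : ℕ) :
    #{u : Fin n → Fin N | StrictMono u} = N.choose n := by
  let e : {u : Fin n → Fin N // StrictMono u} ≃ (Fin n ↪o Fin N) :=
    { toFun u := OrderEmbedding.ofStrictMono u.1 u.2
      invFun f := ⟨f, f.strictMono⟩
      left_inv _ := rfl
      right_inv _ := rfl }
  rw [← Fintype.card_subtype, ← Nat.card_eq_fintype_card, Nat.card_congr
    (e.trans Set.powersetCard.ofFinEmbEquiv), Set.powersetCard.card, Nat.card_fin]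

namespace Tuple

variable {n : ℕ} {α : Type*} [LinearOrder α] {f : Fin n → α}

lemma sort_eq_iff_strictMono (hf : Function.Injective f) {σ : Equiv.Perm (Fin n)} :
    sort f = σ ↔ StrictMono (f ∘ σ) := by
  rw [eq_comm, eq_sort_iff]
  refine ⟨fun h => h.1.strictMono_of_injective (hf.comp σ.injective), fun h => ⟨h.monotone, ?_⟩⟩
  intro i j hij hfij
  exact absurd (σ.injective (hf hfij)) hij.ne

lemma sort_inv_lt_sort_inv_iff (hf : Function.Injective f) {p q : Fin n} :
    (sort f)⁻¹ p < (sort f)⁻¹ q ↔ f p < f q := by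
  have hmono := (sort_eq_iff_strictMono hf).mp rfl
  simpa only [Function.comp_apply, Equiv.Perm.coe_inv, Equiv.apply_symm_apply] using
    (hmono.lt_iff_lt (a := (sort f)⁻¹ p) (b := (sort f)⁻¹ q)).symm

end Tuple

section Standardization

variable {n m : ℕ}

def stdKey (w : Fin n → Fin m) (p : Fin n) : Fin m ×ₗ (Fin n)ᵒᵈ :=
  toLex (w p, OrderDual.toDual p)

lemma stdKey_injective (w : Fin n → Fin m) : Function.Injective (stdKey w) :=
  fun _ _ h => by simpa [stdKey] using congrArg (fun x => (ofLex x).2) h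

/-- `standardize w p` is the rank of the position `p` when positions are ordered by their
letter, equal letters from right to left. -/
def standardize (w : Fin n → Fin m) : Equiv.Perm (Fin n) :=
  (Tuple.sort (stdKey w))⁻¹

lemma IsSmirnov.lt_iff_standardize_lt {w : Fin n → Fin m} (hw : IsSmirnov w) {p q : Fin n}
    (hqp : (q : ℕ) ≤ p + 1) : w q < w p ↔ standardize w q < standardize w p := by
  rw [standardize, Tuple.sort_inv_lt_sort_inv_iff (stdKey_injective w), stdKey, stdKey,
    Prod.Lex.toLex_lt_toLex, OrderDual.toDual_lt_toDual]
  refine ⟨Or.inl, ?_⟩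
  rintro (hlt | ⟨heq, hpq⟩)
  · exact hlt
  · rw [Fin.lt_def] at hpq
    have hp : (p : ℕ) + 1 < n := by omega
    obtain rfl : q = ⟨p + 1, hp⟩ := Fin.ext (show (q : ℕ) = p + 1 by omega)
    exact absurd heq (hw p hp)

lemma IsSmirnov.desc_eq {w : Fin n → Fin m} (hw : IsSmirnov w) :
    desc w = desc ⇑(standardize w) := by
  unfold desc
  congr 1
  exact filter_congr fun _ _ => exists_congr fun _ => hw.lt_iff_standardize_lt le_rfl

lemma IsSmirnov.cdesc_eq {w : Fin n → Fin m} (hw : IsSmirnov w) :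
    cdesc w = cdesc ⇑(standardize w) := by
  unfold cdesc
  congr 1
  exact filter_congr fun _ _ => hw.lt_iff_standardize_lt (Nat.mod_le _ _)

lemma IsSmirnov.firstLtLast_iff {w : Fin n → Fin m} (hw : IsSmirnov w) :
    FirstLtLast w ↔ FirstLtLast ⇑(standardize w) :=
  exists_congr fun _ => hw.lt_iff_standardize_lt (Nat.zero_le _)

end Standardization

section WeaklyIncreasing

variable {n m : ℕ}

def StrictMonoOff (D : Finset ℕ) (v : Fin n → Fin m) : Prop :=
  ∀ g (hg : g + 1 < n), v ⟨g, by omega⟩ < v ⟨g + 1, hg⟩ ∨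
    v ⟨g, by omega⟩ = v ⟨g + 1, hg⟩ ∧ g ∈ D

def gapsBelow (D : Finset ℕ) (i : ℕ) : ℕ := #{g ∈ range i | g ∈ D}

lemma gapsBelow_succ (D : Finset ℕ) (i : ℕ) :
    gapsBelow D (i + 1) = gapsBelow D i + if i ∈ D then 1 else 0 := by
  simp only [gapsBelow, card_filter, sum_range_succ]

lemma gapsBelow_le_self (D : Finset ℕ) (i : ℕ) : gapsBelow D i ≤ i :=
  (card_filter_le _ _).trans (card_range i).le

lemma gapsBelow_le_card (D : Finset ℕ) (i : ℕ) : gapsBelow D i ≤ #D :=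
  card_le_card fun _ hg => (mem_filter.mp hg).2

lemma gapsBelow_eq_card {D : Finset ℕ} {i : ℕ} (h : ∀ g ∈ D, g < i) : gapsBelow D i = #D := by
  rw [gapsBelow, filter_mem_eq_inter, inter_eq_right.mpr fun g hg => mem_range.mpr (h g hg)]

def shiftByGaps (D : Finset ℕ) (v : Fin n → Fin m) (i : Fin n) : Fin (m + #D) :=
  ⟨v i + gapsBelow D i, by have := (v i).isLt; have := gapsBelow_le_card D i; omega⟩

lemma strictMono_shiftByGaps_iff {D : Finset ℕ} {v : Fin n → Fin m} :
    StrictMono (shiftByGaps D v) ↔ StrictMonoOff D v := by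
  rw [Fin.strictMono_iff_lt_next]
  refine forall₂_congr fun g _ => ?_
  simp only [shiftByGaps, Fin.lt_def, Fin.ext_iff, gapsBelow_succ]
  split_ifs with hgD <;> simp only [hgD, and_true, and_false, or_false] <;> omega

lemma exists_shiftByGaps_eq {D : Finset ℕ} (hD : ∀ g ∈ D, g + 1 < n)
    {u : Fin n → Fin (m + #D)} (hu : StrictMono u) : ∃ v, shiftByGaps D v = u := by
  have hge (i : Fin n) : gapsBelow D i ≤ u i := by
    have : (i : ℕ) ≤ u i := by
      simpa using card_le_card_of_injOn u (s := Iic i) (t := Iic (u i))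
        (fun j hj => mem_Iic.mpr (hu.monotone (mem_Iic.mp hj))) hu.injective.injOn
    exact (gapsBelow_le_self D i).trans this
  set a : Fin n → ℕ := fun i => u i - gapsBelow D i
  have ha : Monotone a := Fin.monotone_of_le_next fun g hg => by
    have := hu (show (⟨g, by omega⟩ : Fin n) < ⟨g + 1, hg⟩ by simp [Fin.lt_def])
    have := hge ⟨g, by omega⟩
    simp only [a, gapsBelow_succ, Fin.lt_def] at *
    split_ifs at * <;> omega
  have hlt (i : Fin n) : a i < m := by
    have hlast : n - 1 < n := by have := i.isLt; omega
    have := ha (Fin.le_iff_val_le_val.mpr (Nat.le_sub_one_of_lt i.isLt) : i ≤ ⟨n - 1, hlast⟩)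
    have := (u ⟨n - 1, hlast⟩).isLt
    have := hge ⟨n - 1, hlast⟩
    have := gapsBelow_eq_card (D := D) (i := n - 1) fun g hg => by have := hD g hg; omega
    simp only [a] at *
    omega
  refine ⟨fun i => ⟨a i, hlt i⟩, funext fun i => Fin.ext ?_⟩
  simp only [shiftByGaps, a]
  have := hge i
  omega

lemma card_strictMonoOff (D : Finset ℕ) (hD : ∀ g ∈ D, g + 1 < n) :
    #{v : Fin n → Fin m | StrictMonoOff D v} = (m + #D).choose n := by
  rw [← card_filter_strictMono]
  refine card_nbij (shiftByGaps D) (fun v hv => ?_) (fun v _ v' _ h => ?_) (fun u hu => ?_)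
  · simpa [strictMono_shiftByGaps_iff] using hv
  · funext i
    simpa [shiftByGaps, Fin.ext_iff] using congrFun h i
  · obtain ⟨v, rfl⟩ := exists_shiftByGaps_eq hD (by simpa using hu)
    exact ⟨v, by simpa [← strictMono_shiftByGaps_iff] using hu, rfl⟩

end WeaklyIncreasing

section Fibers

variable {n m : ℕ}

lemma mem_Des2_iff {σ : Equiv.Perm (Fin n)} {g : ℕ} (hg : g + 1 < n) :
    g ∈ Des2 σ ↔ (σ ⟨g + 1, hg⟩ : ℕ) + 2 ≤ σ ⟨g, by omega⟩ := by
  simp [Des2, hg, Nat.lt_of_succ_lt hg]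

lemma StrictMonoOff.lt_or_eq_and_add_two_le {σ : Equiv.Perm (Fin n)} {v : Fin n → Fin m}
    (hv : StrictMonoOff (Des2 σ) v) {i j : Fin n} (hij : i < j) :
    v i < v j ∨ v i = v j ∧ (σ j : ℕ) + 2 ≤ σ i := by
  -- `σ g + 2 g` does not increase along a run of equal letters of `v`
  have hmono : Monotone fun g => toLex (v g, OrderDual.toDual ((σ g : ℕ) + 2 * g)) :=
    Fin.monotone_of_le_next fun g hg => by
      rw [Prod.Lex.toLex_le_toLex, OrderDual.toDual_le_toDual]
      rcases hv g hg with hlt | ⟨heq, hgD⟩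
      · exact Or.inl hlt
      · exact Or.inr ⟨heq, by have := (mem_Des2_iff hg).mp hgD; simp only at this ⊢; omega⟩
  rcases Prod.Lex.toLex_le_toLex.mp (hmono hij.le) with hlt | ⟨heq, hle⟩
  · exact Or.inl hlt
  · rw [OrderDual.toDual_le_toDual, Fin.lt_def] at *
    exact Or.inr ⟨heq, by omega⟩

lemma isSmirnov_and_sort_eq_iff {w : Fin n → Fin m} {σ : Equiv.Perm (Fin n)} :
    IsSmirnov w ∧ Tuple.sort (stdKey w) = σ ↔ StrictMonoOff (Des2 σ) (w ∘ σ) := by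
  rw [Tuple.sort_eq_iff_strictMono (stdKey_injective w)]
  constructor
  · rintro ⟨hw, hmono⟩ g hg
    have := hmono (show (⟨g, by omega⟩ : Fin n) < ⟨g + 1, hg⟩ by simp [Fin.lt_def])
    simp only [Function.comp_apply, stdKey, Prod.Lex.toLex_lt_toLex,
      OrderDual.toDual_lt_toDual] at this
    rcases this with hlt | ⟨heq, hσ⟩
    · exact Or.inl hlt
    · refine Or.inr ⟨heq, (mem_Des2_iff hg).mpr ?_⟩
      by_contra hadj
      rw [Fin.lt_def] at hσ
      have hp : (σ ⟨g + 1, hg⟩ : ℕ) + 1 < n := by omega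
      refine hw _ hp (Eq.trans ?_ heq)
      congr 1
      exact Fin.ext (by simp only; omega)
  · intro hv
    have tie {i j : Fin n} (hij : i < j) (heq : w (σ i) = w (σ j)) : (σ j : ℕ) + 2 ≤ σ i :=
      ((hv.lt_or_eq_and_add_two_le hij).resolve_left (by simp [heq])).2
    refine ⟨fun p hp heq => ?_, fun i j hij => ?_⟩
    · rcases lt_trichotomy (σ⁻¹ p) (σ⁻¹ ⟨p + 1, hp⟩) with hlt | heq' | hgt
      · have := tie hlt (by simpa using heq.symm)
        simp only [Equiv.Perm.coe_inv, Equiv.apply_symm_apply] at this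
        omega
      · simp [Fin.ext_iff] at heq'
      · have := tie hgt (by simpa using heq)
        simp only [Equiv.Perm.coe_inv, Equiv.apply_symm_apply] at this
        omega
    · simp only [Function.comp_apply, stdKey, Prod.Lex.toLex_lt_toLex,
        OrderDual.toDual_lt_toDual, Fin.lt_def]
      rcases hv.lt_or_eq_and_add_two_le hij with hlt | ⟨heq, hle⟩
      · exact Or.inl hlt
      · exact Or.inr ⟨heq, by omega⟩

lemma card_isSmirnov_standardize_eq (τ : Equiv.Perm (Fin n)) :
    #{w : Fin n → Fin m | IsSmirnov w ∧ standardize w = τ} = (m + #(Des2 τ⁻¹)).choose n := by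
  rw [← card_strictMonoOff (Des2 τ⁻¹) fun g hg => by
    obtain ⟨-, h, -⟩ := mem_filter.mp hg; exact h]
  refine card_equiv (Equiv.arrowCongr τ (Equiv.refl _)) fun w => ?_
  simp only [mem_filter, mem_univ, true_and, standardize, inv_eq_iff_eq_inv,
    isSmirnov_and_sort_eq_iff]
  rfl

lemma sum_isSmirnov_eq_sum_perm {M : Type*} [AddCommMonoid M] (F : Equiv.Perm (Fin n) → M) :
    ∑ w : Fin n → Fin m with IsSmirnov w, F (standardize w) =
      ∑ τ : Equiv.Perm (Fin n), (m + #(Des2 τ⁻¹)).choose n • F τ := by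
  rw [← sum_fiberwise' _ standardize]
  refine sum_congr rfl fun τ _ => ?_
  rw [sum_const, filter_filter, card_isSmirnov_standardize_eq]

end Fibers

theorem smirnov_specialization_general (m n : ℕ) :
    ((∑ w ∈ Finset.univ.filter (fun w : Fin n → Fin m => IsSmirnov w ∧ FirstLtLast w),
        (Polynomial.X : Polynomial ℤ) ^ desc w) =
      ∑ σ ∈ Finset.univ.filter (fun σ : Equiv.Perm (Fin n) => FirstLtLast ⇑σ),
        ((m + (Des2 σ⁻¹).card).choose n : Polynomial ℤ) * Polynomial.X ^ desc ⇑σ) ∧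
    ((∑ w ∈ Finset.univ.filter (fun w : Fin n → Fin m => IsSmirnov w),
        (Polynomial.X : Polynomial ℤ) ^ cdesc w) =
      ∑ σ : Equiv.Perm (Fin n),
        ((m + (Des2 σ⁻¹).card).choose n : Polynomial ℤ) * Polynomial.X ^ cdesc ⇑σ) := by
  constructor
  · calc
      _ = ∑ w : Fin n → Fin m with IsSmirnov w,
            if FirstLtLast ⇑(standardize w) then (X : ℤ[X]) ^ desc ⇑(standardize w) else 0 := by
        rw [← filter_filter, sum_filter]
        refine sum_congr rfl fun w hw => ?_
        have hw := (mem_filter.mp hw).2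
        rw [hw.firstLtLast_iff, hw.desc_eq]
      _ = _ := by
        rw [sum_isSmirnov_eq_sum_perm
          (fun τ => if FirstLtLast ⇑τ then (X : ℤ[X]) ^ desc ⇑τ else 0), sum_filter]
        simp only [smul_ite, smul_zero, nsmul_eq_mul]
  · calc
      _ = ∑ w : Fin n → Fin m with IsSmirnov w, (X : ℤ[X]) ^ cdesc ⇑(standardize w) :=
        sum_congr rfl fun w hw => by rw [(mem_filter.mp hw).2.cdesc_eq]
      _ = _ := by
        simp only [sum_isSmirnov_eq_sum_perm (fun τ => (X : ℤ[X]) ^ cdesc ⇑τ), nsmul_eq_mul]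

/-- Specializations: for Smirnov words over `[m]`,
`Σ_{w, w₁<wₙ} t^{des w} = Σ_{σ(1)<σ(n)} t^{des σ} C(m + |Des_{≥2}(σ⁻¹)|, n)` and
`Σ_w t^{cdes w} = Σ_{σ ∈ S_n} t^{cdes σ} C(m + |Des_{≥2}(σ⁻¹)|, n)`. -/
theorem smirnov_specialization (m n : ℕ) (hm : 1 ≤ m) (hn : 1 ≤ n) :
    ((∑ w ∈ Finset.univ.filter (fun w : Fin n → Fin m => IsSmirnov w ∧ FirstLtLast w),
        (Polynomial.X : Polynomial ℤ) ^ desc w) =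
      ∑ σ ∈ Finset.univ.filter (fun σ : Equiv.Perm (Fin n) => FirstLtLast ⇑σ),
        ((m + (Des2 σ⁻¹).card).choose n : Polynomial ℤ) * Polynomial.X ^ desc ⇑σ) ∧
    ((∑ w ∈ Finset.univ.filter (fun w : Fin n → Fin m => IsSmirnov w),
        (Polynomial.X : Polynomial ℤ) ^ cdesc w) =
      ∑ σ : Equiv.Perm (Fin n),
        ((m + (Des2 σ⁻¹).card).choose n : Polynomial ℤ) * Polynomial.X ^ cdesc ⇑σ) :=
  smirnov_specialization_general m n

end
end

section
/- For all n ≥ 2, the following identities hold in ℤ[t]: A_n^<(1,t) = (d/dt)( t · A_{n−1}(t) ) and Ã_n(1,t) = n t A_{n−1}(t); equivalently, Σ_{σ ∈ S_n, σ(1)<σ(n)} t^{des(σ)} = (d/dt)( t · A_{n−1}(t) ) and Σ_{σ ∈ S_n} t^{cdes(σ)} = n t A_{n−1}(t). -/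
open Finset MvPolynomial Polynomial

attribute [local instance] Classical.propDecidable

noncomputable section

/-- `A_n^<(q,t) ∈ ℤ[q][t]`, with `t` the outer variable and `q` the inner one -/
def AlessB (n : ℕ) : Polynomial (Polynomial ℤ) :=
  ∑ σ ∈ Finset.univ.filter (fun σ : Equiv.Perm (Fin n) => FirstLtLast ⇑σ),
    Polynomial.C (Polynomial.X ^ maj2 σ⁻¹) * Polynomial.X ^ desc ⇑σ

/-- `Ã_n(q,t) ∈ ℤ[q][t]`, with `t` the outer variable and `q` the inner one -/
def AtilB (n : ℕ) : Polynomial (Polynomial ℤ) :=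
  ∑ σ : Equiv.Perm (Fin n),
    Polynomial.C (Polynomial.X ^ maj2 σ⁻¹) * Polynomial.X ^ cdesc ⇑σ

/-! Every permutation of `Fin (m + 2)` is, uniquely, a rotation `i ↦ v (i + c)` of a permutation
`v = 0 (τ₁+1) ⋯ (τₘ₊₁+1)` with `τ ∈ S_{m+1}`. Rotations preserve cyclic descents, and `v` has
`des τ + 1` of them (the wrap-around `v_last > v_0 = 0` is the extra one); this gives
`Σ t^{cdes} = (m + 2) t A_{m+1}(t)`. A rotation has first letter smaller than its last exactly when
its wrap-around pair is a cyclic descent of `v`, and then `des = cdes - 1 = des τ`. So each `τ`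
contributes `(des τ + 1) t^{des τ}`, and these add up to `(t A_{m+1}(t))'`. -/

open Equiv

section Words

variable {m k : ℕ}

lemma desc_eq_card_filter (w : Fin (m + 1) → Fin k) :
    desc w = #{i : Fin m | w i.succ < w i.castSucc} := by
  simp only [desc, Finset.card_filter, Fin.sum_univ_castSucc, Fin.val_last, lt_irrefl,
    IsEmpty.exists_iff, if_false, add_zero, Fin.val_castSucc]
  refine Finset.sum_congr rfl fun i _ => ?_
  simp only [exists_prop_of_true (Nat.succ_lt_succ i.isLt)]
  rfl

lemma cdesc_eq_card_filter (w : Fin (m + 1) → Fin k) :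
    cdesc w = #{i | w (i + 1) < w i} := by
  unfold cdesc
  congr 1
  refine Finset.filter_congr fun i _ => ?_
  have : (⟨((i : ℕ) + 1) % (m + 1), Nat.mod_lt _ i.pos⟩ : Fin (m + 1)) = i + 1 := by
    ext; simp [Fin.val_add]
  rw [this]

lemma cdesc_eq_desc_add (w : Fin (m + 1) → Fin k) :
    cdesc w = desc w + if w 0 < w (Fin.last m) then 1 else 0 := by
  simp only [cdesc_eq_card_filter, desc_eq_card_filter, Finset.card_filter,
    Fin.sum_univ_castSucc, Fin.coeSucc_eq_succ, Fin.last_add_one]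

lemma firstLtLast_iff (w : Fin (m + 1) → Fin k) : FirstLtLast w ↔ w 0 < w (Fin.last m) := by
  simp [FirstLtLast, Fin.last]

lemma cdesc_eq_desc_add_one_of_firstLtLast (w : Fin (m + 1) → Fin k) (hw : FirstLtLast w) :
    cdesc w = desc w + 1 := by
  rw [cdesc_eq_desc_add, if_pos ((firstLtLast_iff w).1 hw)]

lemma desc_cons (a : Fin k) (w : Fin (m + 1) → Fin k) :
    desc (Fin.cons a w : Fin (m + 2) → Fin k) = (if w 0 < a then 1 else 0) + desc w := by
  rw [desc_eq_card_filter, desc_eq_card_filter, Fin.card_filter_univ_succ']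
  simp only [← Fin.succ_castSucc, Fin.cons_succ, Fin.castSucc_zero, Fin.cons_zero]

lemma desc_comp_strictMono {l : ℕ} {f : Fin k → Fin l} (hf : StrictMono f) (w : Fin m → Fin k) :
    desc (f ∘ w) = desc w := by
  simp only [desc, Function.comp_apply, hf.lt_iff_lt]

lemma cdesc_comp_addRight (w : Fin (m + 1) → Fin k) (c : Fin (m + 1)) :
    cdesc (w ∘ Equiv.addRight c) = cdesc w := by
  rw [cdesc_eq_card_filter, cdesc_eq_card_filter]
  exact Finset.card_equiv (Equiv.addRight c) (by simp [add_right_comm])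

lemma card_filter_lt_sub_one (w : Fin (m + 1) → Fin k) :
    #{c | w c < w (c - 1)} = cdesc w := by
  rw [cdesc_eq_card_filter]
  exact Finset.card_equiv (Equiv.subRight 1) (by simp)

end Words

section Rotations

variable {m : ℕ}

def consZero (τ : Perm (Fin m)) : Perm (Fin (m + 1)) :=
  Perm.decomposeFin.symm (0, τ)

lemma consZero_apply_zero (τ : Perm (Fin m)) : consZero τ 0 = 0 :=
  Perm.decomposeFin_symm_apply_zero 0 τ

lemma coe_consZero (τ : Perm (Fin m)) : ⇑(consZero τ) = Fin.cons 0 (Fin.succ ∘ τ) := by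
  funext i
  refine Fin.cases ?_ (fun j => ?_) i
  · exact consZero_apply_zero τ
  · simp [consZero, Perm.decomposeFin_symm_apply_succ]

lemma consZero_decomposeFin_snd {v : Perm (Fin (m + 1))} (hv : v 0 = 0) :
    consZero (Perm.decomposeFin v).2 = v := by
  have hfst : (Perm.decomposeFin v).1 = 0 := by
    have h := Perm.decomposeFin_symm_apply_zero (Perm.decomposeFin v).1 (Perm.decomposeFin v).2
    rwa [Prod.mk.eta, Equiv.symm_apply_apply, hv, eq_comm] at h
  rw [consZero, ← hfst, Prod.mk.eta, Equiv.symm_apply_apply]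

lemma cdesc_consZero (τ : Perm (Fin (m + 1))) : cdesc ⇑(consZero τ) = desc ⇑τ + 1 := by
  rw [cdesc_eq_desc_add, coe_consZero, desc_cons, desc_comp_strictMono (Fin.strictMono_succ),
    ← Fin.succ_last]
  simp [Fin.succ_pos]

def rotationEquiv (m : ℕ) : Fin (m + 1) × Perm (Fin m) ≃ Perm (Fin (m + 1)) where
  toFun p := consZero p.2 * Equiv.addRight p.1
  invFun σ := (-σ⁻¹ 0, (Perm.decomposeFin (σ * Equiv.addRight (σ⁻¹ 0))).2)
  left_inv := by
    rintro ⟨c, τ⟩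
    have h : (consZero τ * Equiv.addRight c)⁻¹ 0 = -c := by
      rw [Perm.inv_eq_iff_eq]
      simp [consZero_apply_zero]
    change (-(consZero τ * Equiv.addRight c)⁻¹ 0, (Perm.decomposeFin
      (consZero τ * Equiv.addRight c * Equiv.addRight ((consZero τ * Equiv.addRight c)⁻¹ 0))).2)
      = (c, τ)
    rw [h, neg_neg, mul_assoc, ← Equiv.addRight_add, neg_add_cancel, Equiv.addRight_zero,
      mul_one, consZero, Equiv.apply_symm_apply]
  right_inv σ := by
    dsimp only
    rw [consZero_decomposeFin_snd (by simp), mul_assoc, ← Equiv.addRight_add]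
    simp

lemma rotationEquiv_apply (c : Fin (m + 1)) (τ : Perm (Fin m)) :
    rotationEquiv m (c, τ) = consZero τ * Equiv.addRight c := rfl

lemma cdesc_rotationEquiv (c : Fin (m + 2)) (τ : Perm (Fin (m + 1))) :
    cdesc ⇑(rotationEquiv (m + 1) (c, τ)) = desc ⇑τ + 1 := by
  rw [rotationEquiv_apply, Perm.coe_mul, cdesc_comp_addRight, cdesc_consZero]

lemma firstLtLast_rotationEquiv (c : Fin (m + 1)) (τ : Perm (Fin m)) :
    FirstLtLast ⇑(rotationEquiv m (c, τ)) ↔ consZero τ c < consZero τ (c - 1) := by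
  rw [firstLtLast_iff, rotationEquiv_apply]
  have hlast : Fin.last m + c = c - 1 := by
    rw [sub_eq_add_neg, neg_eq_of_add_eq_zero_left (Fin.last_add_one m), add_comm c]
  simp [hlast]

end Rotations

section Sums

variable {R : Type} [CommRing R]

lemma card_firstLtLast_rotations {m : ℕ} (τ : Perm (Fin (m + 1))) :
    #{c | FirstLtLast ⇑(rotationEquiv (m + 1) (c, τ))} = desc ⇑τ + 1 := by
  simp only [firstLtLast_rotationEquiv, card_filter_lt_sub_one, cdesc_consZero]

lemma derivative_X_mul_Eul (m : ℕ) :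
    derivative ((X : R[X]) * Eul R m) =
      ∑ τ : Perm (Fin m), (desc ⇑τ + 1) • (X : R[X]) ^ desc ⇑τ := by
  simp [Eul, Finset.mul_sum, ← pow_succ']

theorem sum_X_pow_cdesc (m : ℕ) :
    ∑ σ : Perm (Fin (m + 2)), (X : R[X]) ^ cdesc ⇑σ =
      ((m + 2 : ℕ) : R[X]) * (X : R[X]) * Eul R (m + 1) := by
  rw [← (rotationEquiv (m + 1)).sum_comp, Fintype.sum_prod_type]
  simp only [cdesc_rotationEquiv, pow_succ', ← Finset.mul_sum, Finset.sum_const,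
    Finset.card_univ, Fintype.card_fin, nsmul_eq_mul, Eul]
  ring

theorem sum_X_pow_desc_of_firstLtLast (m : ℕ) :
    ∑ σ ∈ univ.filter (fun σ : Perm (Fin (m + 2)) => FirstLtLast ⇑σ), (X : R[X]) ^ desc ⇑σ =
      derivative ((X : R[X]) * Eul R (m + 1)) := by
  rw [Finset.sum_filter, ← (rotationEquiv (m + 1)).sum_comp, Fintype.sum_prod_type_right,
    derivative_X_mul_Eul]
  refine Finset.sum_congr rfl fun τ _ => ?_
  rw [← card_firstLtLast_rotations, ← Finset.sum_const, Finset.sum_filter]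
  refine Finset.sum_congr rfl fun c _ => if_ctx_congr Iff.rfl (fun hc => ?_) fun _ => rfl
  have hcdesc := cdesc_eq_desc_add_one_of_firstLtLast _ hc
  rw [cdesc_rotationEquiv] at hcdesc
  rw [Nat.add_right_cancel hcdesc]

end Sums

/-- `A_n^<(1,t) = (d/dt)(t A_{n-1}(t))` and `Ã_n(1,t) = n t A_{n-1}(t)`;
equivalently, `Σ_{σ(1)<σ(n)} t^{des σ} = (d/dt)(t A_{n-1}(t))` and
`Σ_{σ} t^{cdes σ} = n t A_{n-1}(t)`. -/
theorem qEulerian_at_one (n : ℕ) (hn : 2 ≤ n) :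
    (Polynomial.map (Polynomial.evalRingHom (1 : ℤ)) (AlessB n) =
      Polynomial.derivative (Polynomial.X * Eul ℤ (n - 1))) ∧
    (Polynomial.map (Polynomial.evalRingHom (1 : ℤ)) (AtilB n) =
      (n : Polynomial ℤ) * Polynomial.X * Eul ℤ (n - 1)) ∧
    ((∑ σ ∈ Finset.univ.filter (fun σ : Equiv.Perm (Fin n) => FirstLtLast ⇑σ),
        (Polynomial.X : Polynomial ℤ) ^ desc ⇑σ) =
      Polynomial.derivative (Polynomial.X * Eul ℤ (n - 1))) ∧
    ((∑ σ : Equiv.Perm (Fin n), (Polynomial.X : Polynomial ℤ) ^ cdesc ⇑σ) =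
      (n : Polynomial ℤ) * Polynomial.X * Eul ℤ (n - 1)) := by
  obtain ⟨m, rfl⟩ : ∃ m, n = m + 2 := ⟨n - 2, by omega⟩
  have hA := sum_X_pow_desc_of_firstLtLast (R := ℤ) m
  have hC := sum_X_pow_cdesc (R := ℤ) m
  refine ⟨?_, ?_, hA, hC⟩
  · simp [AlessB, Polynomial.map_sum, hA]
  · simp [AtilB, Polynomial.map_sum, hC]

end
end
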